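/- arXiv:1710.00820 — 5 statements merged into one kernel-verified Lean document; each statement's English description precedes it below -/
import Mathlib

section
/- Let S be a semigroup that satisfies Property (C₃). Let u be a word that begins and ends with a variable x such that x forms exactly two islands in u, u contains at least one linear variable, and each variable of u other than x forms exactly one island in u. Then for every word v, if S satisfies u ≈ v then v is of the same type as u. -/
set_option maxRecDepth 10000


/-- The alphabet of variables. -/
abbrev Var := ℕ

/-- Words are (possibly empty) lists of variables; elements of the free
semigroup `𝔄⁺` are the nonempty ones. -/
abbrev Word := List Var

/-- Two words are of the same type if they agree after collapsing each
maximal constant run (island) to a single letter. -/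
def sameType (u v : Word) : Prop :=
  u.destutter (· ≠ ·) = v.destutter (· ≠ ·)

/-- The number of islands of a word. -/
def height (u : Word) : ℕ := (u.destutter (· ≠ ·)).length

/-- The set of variables occurring in a word. -/
def con (u : Word) : Set Var := {x | x ∈ u}

/-- `del u X` is the word obtained from `u` by deleting all occurrences of all
variables not in the list `X`; i.e. `u(x₁,…,x_k)` for `X = [x₁,…,x_k]`. -/
def del (u : Word) (X : List Var) : Word := u.filter (· ∈ X)

/-- The set of linear variables of `u` (occurring exactly once). -/
def lin (u : Word) : Set Var := {x | u.count x = 1}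

/-- The set of non-linear variables of `u` (occurring at least twice). -/
def nonlin (u : Word) : Set Var := {x | 2 ≤ u.count x}

/-- The set of variables occurring exactly twice in `u`. -/
def con2 (u : Word) : Set Var := {x | u.count x = 2}

/-- The set of variables occurring at least three times in `u`. -/
def conGt2 (u : Word) : Set Var := {x | 3 ≤ u.count x}

/-- Applying a substitution `Θ : 𝔄 → 𝔄⁺` to a word, as the extension of `Θ`
to a homomorphism. -/
def subst (Θ : Var → Word) (u : Word) : Word := u.flatMap Θ

/-- `w` is a power (with positive exponent) of the variable `c`. -/
def isPowerOf (w : Word) (c : Var) : Prop := ∃ k : ℕ, 0 < k ∧ w = List.replicate k c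

/-- A monoid `M` satisfies the identity `u ≈ v` if every monoid homomorphism
from the free monoid `𝔄*` to `M` (equivalently, the extension of every map
`φ : 𝔄 → M`) identifies `u` and `v`. -/
def MSat (M : Type) [Monoid M] (u v : Word) : Prop :=
  ∀ φ : Var → M, (u.map φ).prod = (v.map φ).prod

/-- Evaluation of a nonempty word in a semigroup under `φ : 𝔄 → S`
(the empty word evaluates to `none`). -/
def evalS {S : Type} [Semigroup S] (φ : Var → S) : Word → Option S
  | [] => none
  | a :: t => some ((t.map φ).foldl (· * ·) (φ a))

/-- A semigroup `S` satisfies the identity `u ≈ v` between nonempty words if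
every semigroup homomorphism from the free semigroup `𝔄⁺` to `S` identifies
`u` and `v`. -/
def SSat (S : Type) [Semigroup S] (u v : Word) : Prop :=
  ∀ φ : Var → S, evalS φ u = evalS φ v

/-- Property (C_ℓ) for a monoid: every word in two variables of height at most
`ℓ` can form an identity of `M` only with a word of the same type. -/
def MPropC (M : Type) [Monoid M] (ℓ : ℕ) : Prop :=
  ∀ x y : Var, x ≠ y → ∀ u : Word, u ≠ [] → (∀ c ∈ u, c = x ∨ c = y) →
    height u ≤ ℓ → ∀ v : Word, MSat M u v → sameType u v

/-- Property (C_ℓ) for a semigroup. -/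
def SPropC (S : Type) [Semigroup S] (ℓ : ℕ) : Prop :=
  ∀ x y : Var, x ≠ y → ∀ u : Word, u ≠ [] → (∀ c ∈ u, c = x ∨ c = y) →
    height u ≤ ℓ → ∀ v : Word, SSat S u v → sameType u v

/-- A monoid is finitely based if some finite set of identities it satisfies
entails all its identities (in every monoid). -/
def MonoidFB (M : Type) [Monoid M] : Prop :=
  ∃ Sig : Finset (Word × Word),
    (∀ p ∈ Sig, MSat M p.1 p.2) ∧
    ∀ (N : Type) [Monoid N], (∀ p ∈ Sig, MSat N p.1 p.2) →
      ∀ u v : Word, MSat M u v → MSat N u v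

/-- A semigroup is finitely based if some finite set of identities (between
nonempty words) it satisfies entails all its identities (in every semigroup). -/
def SemigroupFB (S : Type) [Semigroup S] : Prop :=
  ∃ Sig : Finset (Word × Word),
    (∀ p ∈ Sig, p.1 ≠ [] ∧ p.2 ≠ [] ∧ SSat S p.1 p.2) ∧
    ∀ (T : Type) [Semigroup T], (∀ p ∈ Sig, SSat T p.1 p.2) →
      ∀ u v : Word, u ≠ [] → v ≠ [] → SSat S u v → SSat T u v

/-- `B` is a block of `u` occurring as `u = p ++ B ++ s`: it contains no linear
variables of `u` and is maximal with this property. -/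
def IsBlockAt (u p B s : Word) : Prop :=
  u = p ++ B ++ s ∧ (∀ c ∈ B, c ∉ lin u) ∧
  (∀ c : Var, p.getLast? = some c → c ∈ lin u) ∧
  (∀ c : Var, s.head? = some c → c ∈ lin u)

/-- The word `Uₙ = (x₁⋯xₙ)(xₙ⋯x₁)(x₁⋯xₙ)`. -/
def Uword (n : ℕ) (x : Fin n → Var) : Word :=
  List.ofFn x ++ (List.ofFn x).reverse ++ List.ofFn x

/-- The word `Vₙ = (x₁⋯xₙ)(x₁²x₂²⋯xₙ²)`. -/
def Vword (n : ℕ) (x : Fin n → Var) : Word :=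
  List.ofFn x ++ (List.ofFn x).flatMap (fun c => [c, c])


namespace St13
open List

/-- `Blk w l` : `w` is a concatenation of nonempty constant runs spelling `l`,
with adjacent runs having distinct letters. -/
inductive Blk : Word → List Var → Prop
  | nil : Blk [] []
  | cons (k : ℕ) (c : Var) (hk : 0 < k) {w : Word} {l : List Var}
      (hne : ∀ d, l.head? = some d → d ≠ c) (hw : Blk w l) :
      Blk (List.replicate k c ++ w) (c :: l)

lemma destutter'_replicate_append (c : Var) (k : ℕ) (w : Word) :
    (List.replicate k c ++ w).destutter' (· ≠ ·) c = w.destutter' (· ≠ ·) c := by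
  induction k with
  | zero => simp
  | succ n ih =>
      rw [List.replicate_succ, List.cons_append, List.destutter'_cons_neg _ (by simp)]
      exact ih

lemma destutter'_eq_cons (c : Var) (w : Word) (h : ∀ d, w.head? = some d → d ≠ c) :
    w.destutter' (· ≠ ·) c = c :: w.destutter (· ≠ ·) := by
  cases w with
  | nil => simp
  | cons d w' =>
      have hdc : d ≠ c := h d rfl
      rw [List.destutter'_cons_pos _ hdc.symm, List.destutter_cons']

lemma destutter'_head? (R : Var → Var → Prop) [DecidableRel R] :
    ∀ (l : List Var) (a : Var), (l.destutter' R a).head? = some a := by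
  intro l
  induction l with
  | nil => intro a; simp
  | cons b t ih =>
      intro a
      by_cases h : R a b
      · rw [List.destutter'_cons_pos _ h]; rfl
      · rw [List.destutter'_cons_neg _ h]; exact ih a

lemma destutter_head? (w : Word) : (w.destutter (· ≠ ·)).head? = w.head? := by
  cases w with
  | nil => rfl
  | cons a t => rw [List.destutter_cons']; exact destutter'_head? _ t a

lemma Blk.destutter_eq : ∀ {w l}, Blk w l → w.destutter (· ≠ ·) = l := by
  intro w l h
  induction h with
  | nil => simp
  | cons k c hk hne hw ih =>
      rename_i w' l'
      obtain ⟨k', rfl⟩ : ∃ k', k = k' + 1 := ⟨k - 1, by omega⟩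
      have hh : ∀ d, w'.head? = some d → d ≠ c := by
        intro d hd
        apply hne
        rw [← ih, destutter_head?]
        exact hd
      rw [List.replicate_succ, List.cons_append, List.destutter_cons',
        destutter'_replicate_append, destutter'_eq_cons _ _ hh, ih]

lemma blk_replicate {k : ℕ} (hk : 0 < k) (c : Var) : Blk (List.replicate k c) [c] := by
  simpa using Blk.cons k c hk (l := []) (by simp) Blk.nil

lemma Blk.nil_inv {w : Word} (h : Blk w []) : w = [] := by cases h; rfl

lemma Blk.cons_inv {w : Word} {c : Var} {l : List Var} (h : Blk w (c :: l)) :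
    ∃ k w', 0 < k ∧ w = List.replicate k c ++ w' ∧
      (∀ d, l.head? = some d → d ≠ c) ∧ Blk w' l := by
  cases h with
  | cons k c hk hne hw => exact ⟨k, _, hk, rfl, hne, hw⟩

lemma Blk.singleton_inv {w : Word} {c : Var} (h : Blk w [c]) :
    ∃ k, 0 < k ∧ w = List.replicate k c := by
  obtain ⟨k, w', hk, hw, _, h'⟩ := h.cons_inv
  exact ⟨k, hk, by rw [hw, h'.nil_inv, List.append_nil]⟩

lemma Blk.mem_iff : ∀ {w l}, Blk w l → ∀ a, a ∈ w ↔ a ∈ l := by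
  intro w l h
  induction h with
  | nil => simp
  | cons k c hk hne hw ih =>
      intro a
      simp only [List.mem_append, List.mem_replicate, List.mem_cons, ih a]
      constructor
      · rintro (⟨-, rfl⟩ | h) <;> tauto
      · rintro (rfl | h) <;> [exact Or.inl ⟨by omega, rfl⟩; exact Or.inr h]

lemma Blk.eq_nil_iff {w l} (h : Blk w l) : w = [] ↔ l = [] := by
  cases h with
  | nil => simp
  | cons k c hk hne hw =>
      simp only [List.append_eq_nil_iff, List.replicate_eq_nil_iff]
      constructor
      · rintro ⟨h1, -⟩; omega
      · intro h1; simp at h1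

lemma Blk.append : ∀ {w₁ l₁}, Blk w₁ l₁ → ∀ {w₂ l₂}, Blk w₂ l₂ →
    (∀ c, l₁.getLast? = some c → ∀ d, l₂.head? = some d → d ≠ c) →
    Blk (w₁ ++ w₂) (l₁ ++ l₂) := by
  intro w₁ l₁ h₁
  induction h₁ with
  | nil => intro w₂ l₂ h₂ _; simpa using h₂
  | cons k c hk hne hw ih =>
      rename_i w' l'
      intro w₂ l₂ h₂ hsep
      rw [List.append_assoc, List.cons_append]
      refine Blk.cons k c hk ?_ (ih h₂ ?_)
      · intro d hd
        cases l' with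
        | nil =>
            simp only [List.nil_append] at hd
            exact hsep c rfl d hd
        | cons e t => simp only [List.cons_append, List.head?_cons] at hd
                      exact hne d (by rw [List.head?_cons]; exact hd)
      · intro c' hc' d hd
        cases l' with
        | nil => simp at hc'
        | cons e t =>
            apply hsep c' _ d hd
            rw [List.getLast?_cons_cons]
            exact hc'

lemma exists_leading_run : ∀ (w : Word) (c : Var), ∃ k w', 0 < k ∧
    c :: w = List.replicate k c ++ w' ∧ (∀ d, w'.head? = some d → d ≠ c) := by
  intro w
  induction w with
  | nil => intro c; exact ⟨1, [], one_pos, rfl, by simp⟩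
  | cons b t ih =>
      intro c
      by_cases hbc : b = c
      · obtain ⟨k, w', hk, hw, hhd⟩ := ih c
        subst hbc
        exact ⟨k + 1, w', by omega, by rw [List.replicate_succ, List.cons_append, ← hw], hhd⟩
      · refine ⟨1, b :: t, one_pos, rfl, ?_⟩
        intro d hd
        simp only [List.head?_cons, Option.some.injEq] at hd
        rw [← hd]; exact hbc

lemma blk_destutter (w : Word) : Blk w (w.destutter (· ≠ ·)) := by
  suffices h : ∀ n (w : Word), w.length ≤ n → Blk w (w.destutter (· ≠ ·)) from
    h w.length w le_rfl
  intro n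
  induction n with
  | zero =>
      intro w hw
      have : w = [] := List.eq_nil_of_length_eq_zero (by omega)
      subst this; simpa using Blk.nil
  | succ n ih =>
      intro w hw
      cases w with
      | nil => simpa using Blk.nil
      | cons c t =>
          obtain ⟨k, w', hk, hw', hhd⟩ := exists_leading_run t c
          rw [hw']
          have hlen : w'.length ≤ n := by
            have := congrArg List.length hw'
            simp only [List.length_cons, List.length_append, List.length_replicate] at this
            simp only [List.length_cons] at hw
            omega
          have hd : (List.replicate k c ++ w').destutter (· ≠ ·) =
              c :: w'.destutter (· ≠ ·) := by
            obtain ⟨k', rfl⟩ : ∃ k', k = k' + 1 := ⟨k - 1, by omega⟩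
            rw [List.replicate_succ, List.cons_append, List.destutter_cons',
              destutter'_replicate_append, destutter'_eq_cons _ _ hhd]
          rw [hd]
          refine Blk.cons k c hk ?_ (ih w' hlen)
          intro d hdd
          apply hhd
          rw [← destutter_head?]
          exact hdd

lemma Blk.split : ∀ {l₁ l₂ : List Var} {w : Word}, Blk w (l₁ ++ l₂) →
    ∃ w₁ w₂, w = w₁ ++ w₂ ∧ Blk w₁ l₁ ∧ Blk w₂ l₂ := by
  intro l₁
  induction l₁ with
  | nil => intro l₂ w h; exact ⟨[], w, by simp, Blk.nil, by simpa using h⟩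
  | cons c l₁' ih =>
      intro l₂ w h
      rw [List.cons_append] at h
      obtain ⟨k, w', hk, rfl, hhd, hw'⟩ := h.cons_inv
      obtain ⟨w₁, w₂, rfl, h₁, h₂⟩ := ih hw'
      refine ⟨List.replicate k c ++ w₁, w₂, by rw [List.append_assoc], ?_, h₂⟩
      refine Blk.cons k c hk ?_ h₁
      intro d hd
      apply hhd
      cases l₁' with
      | nil => simp at hd
      | cons e l'' => simpa using hd

end St13


namespace St13
open List

variable {S : Type} [Semigroup S]

/-- word evaluation in `WithOne S`. -/
def F (φ : Var → S) (w : Word) : WithOne S := (w.map (fun a => ((φ a : S) : WithOne S))).prod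

lemma foldl_eq (φ : Var → S) : ∀ (t : Word) (s : S),
    (s : WithOne S) * (t.map (fun a => ((φ a : S) : WithOne S))).prod
      = ((t.map φ).foldl (· * ·) s : S) := by
  intro t
  induction t with
  | nil => intro s; simp
  | cons b t ih =>
      intro s
      rw [List.map_cons, List.map_cons, List.prod_cons, ← mul_assoc, ← WithOne.coe_mul, ih,
        List.foldl_cons]

lemma F_eq (φ : Var → S) (w : Word) :
    F φ w = (evalS φ w).elim 1 (fun s => (s : WithOne S)) := by
  cases w with
  | nil => simp [F, evalS]
  | cons a t =>
      show F φ (a :: t) = ((evalS φ (a :: t)).elim 1 _)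
      rw [show evalS φ (a :: t) = some ((t.map φ).foldl (· * ·) (φ a)) from rfl]
      simp only [Option.elim]
      rw [← foldl_eq φ t (φ a)]
      rw [F, List.map_cons, List.prod_cons]

lemma evalS_eq_iff (φ : Var → S) (u v : Word) : evalS φ u = evalS φ v ↔ F φ u = F φ v := by
  rw [F_eq, F_eq]
  constructor
  · intro h; rw [h]
  · intro h
    cases hu : evalS φ u with
    | none =>
      cases hv : evalS φ v with
      | none => rfl
      | some s =>
          rw [hu, hv] at h
          simp only [Option.elim_none, Option.elim_some] at h
          exact absurd h.symm (WithOne.coe_ne_one)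
    | some s =>
      cases hv : evalS φ v with
      | none =>
          rw [hu, hv] at h
          simp only [Option.elim_none, Option.elim_some] at h
          exact absurd h (WithOne.coe_ne_one)
      | some s' =>
          rw [hu, hv] at h
          simp only [Option.elim_none, Option.elim_some] at h
          rw [WithOne.coe_inj] at h
          rw [h]

lemma evalS_eq_none_iff (φ : Var → S) (w : Word) : evalS φ w = none ↔ w = [] := by
  cases w with
  | nil => simp [evalS]
  | cons a t => simp [evalS]

lemma subst_cons (Θ : Var → Word) (a : Var) (t : Word) :
    subst Θ (a :: t) = Θ a ++ subst Θ t := by simp [subst]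

lemma subst_append (Θ : Var → Word) (w₁ w₂ : Word) :
    subst Θ (w₁ ++ w₂) = subst Θ w₁ ++ subst Θ w₂ := by simp [subst]

lemma F_subst (φ : Var → S) (Θ : Var → Word) (hΘ : ∀ a, Θ a ≠ []) (d : S) :
    ∀ w : Word, F φ (subst Θ w) = F (fun a => ((evalS φ (Θ a)).getD d)) w := by
  intro w
  induction w with
  | nil => simp [F, subst]
  | cons a t ih =>
      have h1 : (List.map (fun a => ((φ a : S) : WithOne S)) (Θ a)).prod
          = (((evalS φ (Θ a)).getD d : S) : WithOne S) := by
        have := F_eq φ (Θ a)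
        cases hev : evalS φ (Θ a) with
        | none => exact absurd ((evalS_eq_none_iff φ (Θ a)).mp hev) (hΘ a)
        | some s => rw [hev] at this; simpa [F] using this
      rw [subst_cons]
      simp only [F, List.map_append, List.prod_append, List.map_cons, List.prod_cons]
      simp only [F] at ih
      rw [h1, ih]

lemma subst_closed {u v : Word} (h : SSat S u v) (Θ : Var → Word) (hΘ : ∀ a, Θ a ≠ []) :
    SSat S (subst Θ u) (subst Θ v) := by
  intro φ
  rw [evalS_eq_iff]
  rw [F_subst φ Θ hΘ (φ 0) u, F_subst φ Θ hΘ (φ 0) v]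
  exact (evalS_eq_iff _ u v).mp (h _)

lemma subst_single (g : Var → Var) (w : Word) : subst (fun a => [g a]) w = w.map g := by
  induction w with
  | nil => rfl
  | cons a t ih => rw [subst_cons, ih]; rfl

lemma subst_all {Θ : Var → Word} {w : Word} {c : Var} (h : ∀ a ∈ w, Θ a = [c]) :
    subst Θ w = List.replicate w.length c := by
  induction w with
  | nil => rfl
  | cons a t ih =>
      rw [subst_cons, h a (by simp), ih (fun b hb => h b (by simp [hb])),
        List.length_cons, List.replicate_succ]
      rfl

end St13

namespace St13
open List

def Hyp (L D : List Var) : Prop :=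
  ∀ L₁ L₂ L₃, L = L₁ ++ L₂ ++ L₃ →
    ∃ D₁ D₂ D₃, D = D₁ ++ D₂ ++ D₃ ∧ (∀ a ∈ D₁, a ∉ L₂) ∧ (∀ a ∈ D₂, a ∈ L₂) ∧
      (∀ a ∈ D₃, a ∉ L₂)

lemma small_list {l : List Var} {a : Var} (h : ∀ e ∈ l, e = a) (hnd : l.Nodup) :
    l = [] ∨ l = [a] := by
  match l with
  | [] => exact Or.inl rfl
  | [e] => exact Or.inr (by rw [h e (by simp)])
  | e :: e' :: t =>
      exfalso
      have he : e = a := h e (by simp)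
      have he' : e' = a := h e' (by simp)
      rw [List.nodup_cons] at hnd
      exact hnd.1 (by simp [he, he'])

theorem pc : ∀ (L D : List Var), L.Nodup → D.Nodup → (∀ a, a ∈ D ↔ a ∈ L) → Hyp L D →
    D = L ∨ D = L.reverse := by
  intro L
  induction L with
  | nil =>
      intro D _ _ hmem _
      left
      rw [List.eq_nil_iff_forall_not_mem]
      intro a ha
      simpa using (hmem a).mp ha
  | cons a M ih =>
      intro D hL hD hmem hyp
      have haM : a ∉ M := (List.nodup_cons.mp hL).1
      have hMnd : M.Nodup := (List.nodup_cons.mp hL).2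
      obtain ⟨E₁, E₂, E₃, hE, hE₁, hE₂, hE₃⟩ := hyp [a] M [] (by simp)
      have haD : a ∈ D := (hmem a).mpr (by simp)
      have hE₁a : ∀ e ∈ E₁, e = a := by
        intro e he
        have heD : e ∈ D := by
          rw [hE]; exact List.mem_append_left _ (List.mem_append_left _ he)
        rcases List.mem_cons.mp ((hmem e).mp heD) with h | h
        · simpa using h
        · exact absurd (by simpa using hE₁ e he : e ∉ M) (by simp [h])
      have hE₃a : ∀ e ∈ E₃, e = a := by
        intro e he
        have heD : e ∈ D := by rw [hE]; exact List.mem_append_right _ he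
        rcases List.mem_cons.mp ((hmem e).mp heD) with h | h
        · simpa using h
        · exact absurd (by simpa using hE₃ e he : e ∉ M) (by simp [h])
      have hndD : (E₁ ++ E₂ ++ E₃).Nodup := hE ▸ hD
      rw [List.nodup_append, List.nodup_append] at hndD
      obtain ⟨⟨hnd₁, hnd₂, hdisj₁₂⟩, hnd₃, hdisj⟩ := hndD
      have hmemE₂ : ∀ e, e ∈ E₂ ↔ e ∈ M := by
        intro e
        constructor
        · intro he; simpa using hE₂ e he
        · intro he
          have : e ∈ D := (hmem e).mpr (by simp [he])
          rw [hE] at this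
          rcases List.mem_append.mp this with h | h
          · rcases List.mem_append.mp h with h | h
            · exact absurd he (by rw [hE₁a e h]; exact haM)
            · exact h
          · exact absurd he (by rw [hE₃a e h]; exact haM)
      have haE₂ : a ∉ E₂ := fun h => haM ((hmemE₂ a).mp h)
      rcases small_list hE₁a hnd₁ with h1 | h1 <;> rcases small_list hE₃a hnd₃ with h3 | h3
      · -- both empty: a nowhere
        exfalso
        rw [hE, h1, h3] at haD
        simp only [List.nil_append, List.append_nil] at haD
        exact haE₂ haD
      · -- E₁ = [], E₃ = [a] : D = E₂ ++ [a]
        subst h1 h3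
        rw [List.nil_append] at hE
        have hypM : Hyp M E₂ := by
          intro M₁ M₂ M₃ hM
          obtain ⟨D₁, D₂, D₃, hD', h₁, h₂, h₃⟩ := hyp (a :: M₁) M₂ M₃ (by rw [hM]; simp)
          have haM₂ : a ∉ M₂ := fun hh => haM (by rw [hM]; simp [hh])
          have hrev : a :: E₂.reverse = D₃.reverse ++ (D₂.reverse ++ D₁.reverse) := by
            have h' := congrArg List.reverse hD'
            rw [hE] at h'
            simpa [List.reverse_append, List.append_assoc] using h'
          cases hD₃ : D₃.reverse with
          | cons d W =>
              rw [hD₃, List.cons_append] at hrev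
              have hE₂rev : E₂.reverse = W ++ (D₂.reverse ++ D₁.reverse) := (List.cons.inj hrev).2
              have hE₂eq : E₂ = D₁ ++ D₂ ++ W.reverse := by
                have h' := congrArg List.reverse hE₂rev
                rw [List.reverse_reverse] at h'
                rw [h']
                simp [List.reverse_append, List.append_assoc]
              refine ⟨D₁, D₂, W.reverse, hE₂eq, h₁, h₂, ?_⟩
              intro e he
              apply h₃ e
              have hD₃e : D₃ = W.reverse ++ [d] := by
                have := congrArg List.reverse hD₃
                simpa using this
              rw [hD₃e]
              exact List.mem_append_left _ he
          | nil =>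
              have hD₃nil : D₃ = [] := by simpa using congrArg List.reverse hD₃
              cases hD₂ : D₂.reverse with
              | cons d W =>
                  rw [hD₃, hD₂] at hrev
                  simp only [List.nil_append, List.cons_append] at hrev
                  have hda : d = a := ((List.cons.inj hrev).1).symm
                  exact absurd (h₂ d (by rw [← List.mem_reverse, hD₂]; simp)) (hda ▸ haM₂)
              | nil =>
                  have hD₂nil : D₂ = [] := by simpa using congrArg List.reverse hD₂
                  refine ⟨E₂, [], [], by simp, ?_, by simp, by simp⟩
                  intro e he
                  apply h₁ e
                  have hD₁e : D₁ = E₂ ++ [a] := by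
                    rw [hD₃nil, hD₂nil] at hD'
                    simp only [List.append_nil] at hD'
                    rw [← hD']
                    exact hE
                  rw [hD₁e]
                  exact List.mem_append_left _ he
        rcases ih E₂ hMnd hnd₂ hmemE₂ hypM with h | h
        · -- E₂ = M : D = M ++ [a]; must coincide with reverse or contradiction
          rw [h] at hE
          cases M with
          | nil => right; rw [hE]; simp
          | cons b M' =>
              cases hM' : M' with
              | nil => right; rw [hE, hM']; simp
              | cons z W =>
                  exfalso
                  obtain ⟨D₁, D₂, D₃, hD', h₁, h₂, h₃⟩ := hyp [] [a, b] M' (by simp [hM'])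
                  have hab : a ≠ b := fun h => haM (h ▸ List.mem_cons_self (a := b) (l := M'))
                  have hDform : D = b :: z :: (W ++ [a]) := by
                    rw [hE, hM']; simp
                  have hbM' : b ∉ M' := (List.nodup_cons.mp hMnd).1
                  have hD₁nil : D₁ = [] := by
                    cases hD₁ : D₁ with
                    | nil => rfl
                    | cons d W' =>
                        exfalso
                        have : d = b := by
                          rw [hD₁] at hD'
                          rw [hDform] at hD'
                          exact ((List.cons.inj (by simpa using hD')).1).symm
                        exact h₁ d (by rw [hD₁]; simp) (by simp [this])
                  rw [hD₁nil, List.nil_append] at hD'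
                  cases hD₂ : D₂ with
                  | nil =>
                      rw [hD₂, List.nil_append] at hD'
                      have : b ∈ D₃ := by rw [← hD', hDform]; simp
                      exact h₃ b this (by simp)
                  | cons d D₂' =>
                      have hdb : d = b := by
                        rw [hD₂] at hD'; rw [hDform] at hD'
                        exact ((List.cons.inj hD').1).symm
                      have haD₂ : a ∈ D₂ := by
                        have : a ∈ D := haD
                        rw [hD'] at this
                        rcases List.mem_append.mp this with h | h
                        · exact h
                        · exact absurd (by simp : a ∈ ([a,b] : List Var)) (h₃ a h)
                      cases hD₂' : D₂' with
                      | nil =>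
                          rw [hD₂', hdb] at hD₂
                          rw [hD₂] at haD₂
                          exact hab (by simpa using haD₂)
                      | cons d' W' =>
                          have hd'z : d' = z := by
                            rw [hD₂, hD₂'] at hD'; rw [hDform] at hD'
                            have := (List.cons.inj hD').2
                            exact ((List.cons.inj this).1).symm
                          have hzM' : z ∈ M' := by rw [hM']; simp
                          rcases List.mem_pair.mp (hd'z ▸ h₂ d' (by rw [hD₂, hD₂']; simp)) with h | h
                          · exact haM (h ▸ (by simp [hzM'] : z ∈ b :: M'))
                          · exact hbM' (h ▸ hzM')
        · -- E₂ = M.reverse : D = M.reverse ++ [a] = L.reverse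
          right
          rw [hE, h]
          simp
      · -- E₁ = [a], E₃ = [] : D = a :: E₂
        subst h1 h3
        rw [List.append_nil] at hE
        have hE' : D = a :: E₂ := by simpa using hE
        have hypM : Hyp M E₂ := by
          intro M₁ M₂ M₃ hM
          obtain ⟨D₁, D₂, D₃, hD', h₁, h₂, h₃⟩ := hyp (a :: M₁) M₂ M₃ (by rw [hM]; simp)
          have haM₂ : a ∉ M₂ := fun hh => haM (by rw [hM]; simp [hh])
          cases hD₁ : D₁ with
          | cons d D₁' =>
              rw [hD₁] at hD'
              rw [hE'] at hD'
              simp only [List.cons_append, List.append_assoc] at hD'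
              obtain ⟨hda, hrest⟩ := List.cons.inj hD'
              refine ⟨D₁', D₂, D₃, by rw [hrest, List.append_assoc], ?_, h₂, h₃⟩
              intro e he
              exact h₁ e (by rw [hD₁]; simp [he])
          | nil =>
              rw [hD₁, List.nil_append] at hD'
              cases hD₂ : D₂ with
              | cons d D₂' =>
                  rw [hD₂] at hD'
                  rw [hE'] at hD'
                  have hda : d = a := ((List.cons.inj (by simpa using hD')).1).symm
                  exact absurd (h₂ d (by rw [hD₂]; simp)) (hda ▸ haM₂)
              | nil =>
                  rw [hD₂, List.nil_append] at hD'
                  refine ⟨[], [], E₂, by simp, by simp, by simp, ?_⟩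
                  intro e he
                  apply h₃ e
                  rw [← hD', hE']
                  simp [he]
        rcases ih E₂ hMnd hnd₂ hmemE₂ hypM with h | h
        · left; rw [hE', h]
        · -- E₂ = M.reverse : D = a :: M.reverse; contradiction unless M short
          rw [h] at hE'
          cases M with
          | nil => left; rw [hE']; simp
          | cons b M' =>
              cases hM' : M' with
              | nil => left; rw [hE', hM']; simp
              | cons z' W' =>
                  exfalso
                  obtain ⟨D₁, D₂, D₃, hD', h₁, h₂, h₃⟩ := hyp [] [a, b] M' (by simp [hM'])
                  have hab : a ≠ b := fun h => haM (h ▸ List.mem_cons_self (a := b) (l := M'))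
                  have hbM' : b ∉ M' := (List.nodup_cons.mp hMnd).1
                  obtain ⟨z, W, hMrev⟩ : ∃ z W, M'.reverse = z :: W := by
                    cases hrev : M'.reverse with
                    | nil => exact absurd (by simpa using congrArg List.reverse hrev) (by simp [hM'])
                    | cons z W => exact ⟨z, W, rfl⟩
                  have hzM' : z ∈ M' := by
                    rw [← List.mem_reverse, hMrev]; simp
                  have hDform : D = a :: z :: (W ++ [b]) := by
                    rw [hE']; simp [hMrev]
                  have hD₁nil : D₁ = [] := by
                    cases hD₁ : D₁ with
                    | nil => rfl
                    | cons d W'' =>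
                        exfalso
                        have : d = a := by
                          rw [hD₁] at hD'; rw [hDform] at hD'
                          exact ((List.cons.inj (by simpa using hD')).1).symm
                        exact h₁ d (by rw [hD₁]; simp) (by simp [this])
                  rw [hD₁nil, List.nil_append] at hD'
                  cases hD₂ : D₂ with
                  | nil =>
                      rw [hD₂, List.nil_append] at hD'
                      have : a ∈ D₃ := by rw [← hD', hDform]; simp
                      exact h₃ a this (by simp)
                  | cons d D₂' =>
                      have hda : d = a := by
                        rw [hD₂] at hD'; rw [hDform] at hD'
                        exact ((List.cons.inj hD').1).symm
                      have hbD₂ : b ∈ D₂ := by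
                        have hbD : b ∈ D := by rw [hDform]; simp
                        rw [hD'] at hbD
                        rcases List.mem_append.mp hbD with h | h
                        · exact h
                        · exact absurd (by simp : b ∈ ([a,b] : List Var)) (h₃ b h)
                      cases hD₂' : D₂' with
                      | nil =>
                          rw [hD₂', hda] at hD₂
                          rw [hD₂] at hbD₂
                          have hba : b = a := by simpa using hbD₂
                          exact hab hba.symm
                      | cons d' W'' =>
                          have hd'z : d' = z := by
                            rw [hD₂, hD₂'] at hD'; rw [hDform] at hD'
                            have := (List.cons.inj hD').2
                            exact ((List.cons.inj this).1).symm
                          rcases List.mem_pair.mp (hd'z ▸ h₂ d' (by rw [hD₂, hD₂']; simp)) with h | h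
                          · exact haM (h ▸ (by simp [hzM'] : z ∈ b :: M'))
                          · exact hbM' (h ▸ hzM')
      · -- E₁ = [a], E₃ = [a] : nodup violated
        exfalso
        subst h1 h3
        exact hdisj _ (show a ∈ [a] ++ E₂ by simp) _ (show a ∈ ([a] : List Var) by simp) rfl

end St13
namespace St13
open List

/- ### further auxiliary lemmas -/

lemma map_eq_replicate {g : Var → Var} {w : Word} {c : Var} (h : ∀ a ∈ w, g a = c) :
    w.map g = List.replicate w.length c := by
  induction w with
  | nil => rfl
  | cons a t ih =>
      rw [List.map_cons, h a (by simp), ih (fun b hb => h b (by simp [hb])),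
        List.length_cons, List.replicate_succ]


lemma count_one_split {w : Word} {t : Var} (h : w.count t = 1) :
    ∃ w₁ w₂, w = w₁ ++ t :: w₂ ∧ t ∉ w₁ ∧ t ∉ w₂ := by
  have ht : t ∈ w := List.count_pos_iff.mp (by omega)
  obtain ⟨w₁, w₂, rfl⟩ := List.append_of_mem ht
  rw [List.count_append, List.count_cons_self] at h
  refine ⟨w₁, w₂, rfl, ?_, ?_⟩
  · rw [← List.count_eq_zero]; omega
  · rw [← List.count_eq_zero]; omega

lemma chain_all_eq_short {l : List Var} {a : Var} (hc : l.Chain' (· ≠ ·))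
    (h : ∀ e ∈ l, e = a) : l.length ≤ 1 := by
  match l with
  | [] => simp
  | [e] => simp
  | e :: e' :: s =>
      exfalso
      have h1 : e = a := h e (by simp)
      have h2 : e' = a := h e' (by simp)
      exact (List.isChain_cons_cons.mp hc).1 (by rw [h1, h2])

/-- alternating word `(ab)^f`. -/
def altW (a b : Var) : ℕ → Word
  | 0 => []
  | f + 1 => a :: b :: altW a b f

lemma altW_length (a b : Var) (f : ℕ) : (altW a b f).length = 2 * f := by
  induction f with
  | zero => rfl
  | succ n ih => simp only [altW, List.length_cons, ih]; omega

lemma subst_replicate_pair (Θ : Var → Word) (t a b : Var) (h : Θ t = [a, b]) :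
    ∀ f, subst Θ (List.replicate f t) = altW a b f := by
  intro f
  induction f with
  | zero => rfl
  | succ n ih => rw [List.replicate_succ, subst_cons, h, ih]; rfl

lemma blk_altW (a b : Var) (hab : a ≠ b) {w : Word} {l : List Var} (hw : Blk w l)
    (hl : ∀ d, l.head? = some d → d ≠ b) :
    ∀ f, Blk (altW a b f ++ w) (altW a b f ++ l) := by
  intro f
  induction f with
  | zero => simpa [altW] using hw
  | succ n ih =>
      show Blk (a :: b :: (altW a b n ++ w)) (a :: b :: (altW a b n ++ l))
      have h2 : Blk (b :: (altW a b n ++ w)) (b :: (altW a b n ++ l)) := by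
        have hb := Blk.cons 1 b one_pos (w := altW a b n ++ w) (l := altW a b n ++ l) ?_ ih
        · simpa using hb
        · intro d hd
          cases n with
          | zero =>
              simp only [altW, List.nil_append] at hd
              exact hl d hd
          | succ n' =>
              have : d = a := by
                simp only [altW, List.cons_append, List.head?_cons,
                  Option.some.injEq] at hd
                exact hd.symm
              rw [this]; exact hab
      have hb := Blk.cons 1 a one_pos (w := b :: (altW a b n ++ w))
        (l := b :: (altW a b n ++ l)) ?_ h2
      · simpa using hb
      · intro d hd
        simp only [List.head?_cons, Option.some.injEq] at hd
        rw [← hd]; exact hab.symm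

lemma img_destutter {x : Var} {p q : ℕ} (hp : 0 < p) (hq : 0 < q) {m : Word}
    {L : List Var}
    (hL : Blk m L) (L₁ L₂ L₃ : List Var) (hsplit : L = L₁ ++ L₂ ++ L₃) (hL₂ : L₂ ≠ [])
    {g : Var → Var} {y : Var} (hyx : y ≠ x) (hgx : g x = x)
    (h1 : ∀ a ∈ L₁, g a = x) (h2 : ∀ a ∈ L₂, g a = y) (h3 : ∀ a ∈ L₃, g a = x) :
    ((List.replicate p x ++ m ++ List.replicate q x).map g).destutter (· ≠ ·) = [x, y, x] := by
  rw [hsplit, List.append_assoc L₁] at hL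
  obtain ⟨m₁, m₂₃, rfl, hb1, hb23⟩ := hL.split
  obtain ⟨m₂, m₃, rfl, hb2, hb3⟩ := hb23.split
  have e1 : m₁.map g = List.replicate m₁.length x :=
    map_eq_replicate (fun a ha => h1 a ((hb1.mem_iff a).mp ha))
  have e2 : m₂.map g = List.replicate m₂.length y :=
    map_eq_replicate (fun a ha => h2 a ((hb2.mem_iff a).mp ha))
  have e3 : m₃.map g = List.replicate m₃.length x :=
    map_eq_replicate (fun a ha => h3 a ((hb3.mem_iff a).mp ha))
  have hm₂ : 0 < m₂.length := by
    rcases Nat.eq_zero_or_pos m₂.length with h | h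
    · exact absurd ((hb2.eq_nil_iff).mp (List.eq_nil_of_length_eq_zero h)) hL₂
    · exact h
  have heq : (List.replicate p x ++ (m₁ ++ (m₂ ++ m₃)) ++ List.replicate q x).map g
      = List.replicate (p + m₁.length) x ++
        (List.replicate m₂.length y ++ List.replicate (m₃.length + q) x) := by
    rw [List.map_append, List.map_append, List.map_append, List.map_append, e1, e2, e3,
      List.map_replicate, List.map_replicate, hgx]
    simp only [List.replicate_add, List.replicate_one, List.length_replicate, List.append_assoc, List.cons_append,
      List.singleton_append, List.nil_append]
  rw [heq]
  have B3 : Blk (List.replicate (m₃.length + q) x) [x] := blk_replicate (by omega) x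
  have B2 : Blk (List.replicate m₂.length y ++ List.replicate (m₃.length + q) x) [y, x] :=
    Blk.cons _ y hm₂ (by intro d hd; simp at hd; rw [← hd]; exact hyx.symm) B3
  exact (Blk.cons _ x (by omega)
    (by intro d hd; simp at hd; rw [← hd]; exact hyx) B2).destutter_eq

lemma key_extract {S : Type} [Semigroup S] (hC3 : SPropC S 3) {u v : Word} (h : SSat S u v)
    (Θ : Var → Word) (hΘ : ∀ a, Θ a ≠ []) {x' y' : Var} {d : List Var} (hxy : x' ≠ y')
    (hdu : (subst Θ u).destutter (· ≠ ·) = d) (hd2 : ∀ c ∈ d, c = x' ∨ c = y')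
    (hlen : d.length ≤ 3) (hdne : d ≠ []) :
    (subst Θ v).destutter (· ≠ ·) = d := by
  have hne : subst Θ u ≠ [] := by
    intro h0
    rw [h0] at hdu
    exact hdne (by simpa using hdu.symm)
  have hmem : ∀ c ∈ subst Θ u, c = x' ∨ c = y' := by
    intro c hc
    have hc' := ((blk_destutter (subst Θ u)).mem_iff c).mp hc
    rw [hdu] at hc'
    exact hd2 c hc'
  have hst := hC3 x' y' hxy (subst Θ u) hne hmem (by rw [height, hdu]; exact hlen)
    (subst Θ v) (subst_closed h Θ hΘ)
  rw [sameType] at hst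
  rw [← hst, hdu]

lemma decode3 {g : Var → Var} {v : Word} {x y : Var}
    (h : (v.map g).destutter (· ≠ ·) = [x, y, x]) :
    ∃ w₁ w₂ w₃, v = w₁ ++ w₂ ++ w₃ ∧ w₁ ≠ [] ∧ w₂ ≠ [] ∧ w₃ ≠ [] ∧
      (∀ a ∈ w₁, g a = x) ∧ (∀ a ∈ w₂, g a = y) ∧ (∀ a ∈ w₃, g a = x) := by
  have hb := blk_destutter (v.map g)
  rw [h] at hb
  obtain ⟨k1, r1, hk1, he1, _, hb1⟩ := hb.cons_inv
  obtain ⟨k2, r2, hk2, he2, _, hb2⟩ := hb1.cons_inv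
  obtain ⟨k3, hk3, he3⟩ := hb2.singleton_inv
  rw [he3] at he2; rw [he2] at he1
  obtain ⟨w₁, w₂₃, rfl, hm1, hm23⟩ := List.map_eq_append_iff.mp he1
  obtain ⟨w₂, w₃, rfl, hm2, hm3⟩ := List.map_eq_append_iff.mp hm23
  have hlen1 : w₁.length = k1 := by
    have := congrArg List.length hm1; simpa using this
  have hlen2 : w₂.length = k2 := by
    have := congrArg List.length hm2; simpa using this
  have hlen3 : w₃.length = k3 := by
    have := congrArg List.length hm3; simpa using this
  refine ⟨w₁, w₂, w₃, by rw [List.append_assoc], ?_, ?_, ?_, ?_, ?_, ?_⟩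
  · intro h0; rw [h0] at hlen1; simp at hlen1; omega
  · intro h0; rw [h0] at hlen2; simp at hlen2; omega
  · intro h0; rw [h0] at hlen3; simp at hlen3; omega
  · intro a ha
    have hm : g a ∈ w₁.map g := List.mem_map_of_mem ha
    rw [hm1] at hm
    exact List.eq_of_mem_replicate hm
  · intro a ha
    have hm : g a ∈ w₂.map g := List.mem_map_of_mem ha
    rw [hm2] at hm
    exact List.eq_of_mem_replicate hm
  · intro a ha
    have hm : g a ∈ w₃.map g := List.mem_map_of_mem ha
    rw [hm3] at hm
    exact List.eq_of_mem_replicate hm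

end St13
open St13 in
/-- let `u` begin and end with `x`, where `x` forms exactly
two islands in `u`, every other variable forms exactly one island, and `u`
contains a linear variable.  Then `u` can form an identity of a semigroup
with Property (C₃) only with a word of the same type. -/
theorem stmt13 (S : Type) [Semigroup S] (hC3 : SPropC S 3) (u : Word)
    (x : Var) (p q : ℕ) (m : Word)
    (hp : 0 < p) (hq : 0 < q) (hm : m ≠ []) (hxm : x ∉ m)
    (hislands : (m.destutter (· ≠ ·)).Nodup)
    (hdecomp : u = List.replicate p x ++ m ++ List.replicate q x)
    (hlin : ∃ t : Var, u.count t = 1) :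
    ∀ v : Word, SSat S u v → sameType u v := by
  intro v hSat
  classical
  set L := m.destutter (· ≠ ·) with hLdef
  have hBm : Blk m L := blk_destutter m
  have hLnd : L.Nodup := hislands
  have hLne : L ≠ [] := fun h => hm ((hBm.eq_nil_iff).mpr h)
  have hxL : x ∉ L := fun h => hxm ((hBm.mem_iff x).mpr h)
  -- destutter of u
  have hBu : Blk u ((x :: L) ++ [x]) := by
    rw [hdecomp]
    have B1 : Blk (List.replicate p x ++ m) (x :: L) := by
      have hb := Blk.append (blk_replicate hp x) hBm ?_
      · simpa using hb
      · intro c hc d hd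
        have hcx : c = x := (by simpa using hc : x = c).symm
        have hdL : d ∈ L := List.mem_of_mem_head? (by simp [hd])
        intro hdc
        rw [hdc, hcx] at hdL
        exact hxL hdL
    have hb := Blk.append B1 (blk_replicate hq x) ?_
    · simpa using hb
    · intro c hc d hd
      have hdx : d = x := (by simpa using hd : x = d).symm
      have hcL : c ∈ L := by
        have hgl : (x :: L).getLast? = L.getLast? := by
          have := List.getLast?_append_of_ne_nil (l₁ := [x]) hLne
          simpa using this
        rw [hgl] at hc
        exact List.mem_of_mem_getLast? (by simp [hc])
      intro hdc
      rw [← hdc, hdx] at hcL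
      exact hxL hcL
  have hdu : u.destutter (· ≠ ·) = (x :: L) ++ [x] := hBu.destutter_eq
  have hulen : 0 < u.length := by
    rw [hdecomp]; simp [List.length_append]; omega
  -- the linear variable
  obtain ⟨t, ht⟩ := hlin
  have hcmx : m.count x = 0 := List.count_eq_zero.mpr hxm
  have htx : t ≠ x := by
    intro h
    rw [h, hdecomp, List.count_append, List.count_append, List.count_replicate,
      List.count_replicate, hcmx] at ht
    simp at ht
    omega
  have hxt : x ≠ t := Ne.symm htx
  have htm1 : m.count t = 1 := by
    rw [hdecomp, List.count_append, List.count_append] at ht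
    simp [List.count_replicate, hxt] at ht
    omega
  have htL : t ∈ L := (hBm.mem_iff t).mp (List.count_pos_iff.mp (by omega))
  -- the head of L
  obtain ⟨c₀, L₀, hL₀⟩ : ∃ c₀ L₀, L = c₀ :: L₀ := by
    cases hLe : L with
    | nil => exact absurd hLe hLne
    | cons a s => exact ⟨a, s, rfl⟩
  have hc₀L : c₀ ∈ L := by rw [hL₀]; simp
  have hc₀x : c₀ ≠ x := fun h => hxL (h ▸ hc₀L)
  -- global three-block split of v
  have himg0 : (u.map (fun a => if a = x then x else c₀)).destutter (· ≠ ·) = [x, c₀, x] := by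
    rw [hdecomp]
    exact img_destutter hp hq hBm [] L [] (by simp) hLne hc₀x (by simp)
      (by simp) (fun a ha => if_neg (fun h => hxL (by rw [← h]; exact ha))) (by simp)
  have hv0 : (v.map (fun a => if a = x then x else c₀)).destutter (· ≠ ·) = [x, c₀, x] := by
    have hk := key_extract (d := [x, c₀, x]) hC3 hSat (fun a => [if a = x then x else c₀]) (fun a => by simp)
      (Ne.symm hc₀x) (by rw [subst_single]; exact himg0)
      (by intro c hc; simp at hc; tauto) (by simp) (by simp)
    rwa [subst_single] at hk
  obtain ⟨X₁, C, X₂, hveq, hX₁ne, hCne, hX₂ne, hgX₁, hgC, hgX₂⟩ := decode3 hv0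
  have hX₁x : ∀ a ∈ X₁, a = x := by
    intro a ha
    by_contra hax
    have hh := hgX₁ a ha
    rw [if_neg hax] at hh
    exact hc₀x hh
  have hX₂x : ∀ a ∈ X₂, a = x := by
    intro a ha
    by_contra hax
    have hh := hgX₂ a ha
    rw [if_neg hax] at hh
    exact hc₀x hh
  have hCx : ∀ a ∈ C, a ≠ x := by
    intro a ha h
    have hh := hgC a ha
    rw [if_pos h] at hh
    exact hc₀x hh.symm
  set D := C.destutter (· ≠ ·) with hDdef
  have hBC : Blk C D := blk_destutter C
  have hDne : D ≠ [] := fun h => hCne ((hBC.eq_nil_iff).mpr h)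
  have hDmemC : ∀ a, a ∈ D → a ∈ C := fun a h => (hBC.mem_iff a).mpr h
  have hDch : D.Chain' (· ≠ ·) := List.isChain_destutter (R := (· ≠ ·)) C
  -- destutter of v
  have hBv : Blk v ((x :: D) ++ [x]) := by
    rw [hveq]
    have hX₁rep : X₁ = List.replicate X₁.length x := List.eq_replicate_of_mem hX₁x
    have hX₂rep : X₂ = List.replicate X₂.length x := List.eq_replicate_of_mem hX₂x
    have bX₁ : Blk X₁ [x] := by
      rw [hX₁rep]; exact blk_replicate (by simpa using List.length_pos_iff.mpr hX₁ne) x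
    have bX₂ : Blk X₂ [x] := by
      rw [hX₂rep]; exact blk_replicate (by simpa using List.length_pos_iff.mpr hX₂ne) x
    have B1 : Blk (X₁ ++ C) (x :: D) := by
      have hb := Blk.append bX₁ hBC ?_
      · simpa using hb
      · intro c hc d hd
        have hcx : c = x := (by simpa using hc : x = c).symm
        have hdD : d ∈ D := List.mem_of_mem_head? (by simp [hd])
        intro hdc
        exact hCx d (hDmemC d hdD) (by rw [hdc, hcx])
    have hb := Blk.append B1 bX₂ ?_
    · simpa using hb
    · intro c hc d hd
      have hdx : d = x := (by simpa using hd : x = d).symm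
      have hcD : c ∈ D := by
        have hgl : (x :: D).getLast? = D.getLast? := by
          have := List.getLast?_append_of_ne_nil (l₁ := [x]) hDne
          simpa using this
        rw [hgl] at hc
        exact List.mem_of_mem_getLast? (by simp [hc])
      intro hdc
      exact hCx c (hDmemC c hcD) (by rw [← hdc, hdx])
  have hdv : v.destutter (· ≠ ·) = (x :: D) ++ [x] := hBv.destutter_eq
  rw [sameType, hdu, hdv]
  suffices hDL : D = L by rw [hDL]
  -- contiguity of intervals
  have contig : ∀ L₁ L₂ L₃ : List Var, L = L₁ ++ L₂ ++ L₃ → L₂ ≠ [] →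
      ∃ w₁ w₂ w₃, v = w₁ ++ w₂ ++ w₃ ∧ w₁ ≠ [] ∧ w₂ ≠ [] ∧ w₃ ≠ [] ∧
        (∀ a ∈ w₁, a ∉ L₂) ∧ (∀ a ∈ w₂, a ∈ L₂) ∧ (∀ a ∈ w₃, a ∉ L₂) := by
    intro L₁ L₂ L₃ hs h2ne
    obtain ⟨y, L₂', hy⟩ : ∃ y L₂', L₂ = y :: L₂' := by
      cases hLe : L₂ with
      | nil => exact absurd hLe h2ne
      | cons a s => exact ⟨a, s, rfl⟩
    have hyL : y ∈ L := by rw [hs, hy]; simp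
    have hyx : y ≠ x := fun h => hxL (h ▸ hyL)
    have hnd2 : (L₁ ++ L₂ ++ L₃).Nodup := hs ▸ hLnd
    rw [List.nodup_append, List.nodup_append] at hnd2
    obtain ⟨⟨-, -, hd12⟩, -, hd123⟩ := hnd2
    have hxL₂ : x ∉ L₂ := fun h =>
      hxL (by rw [hs]; exact List.mem_append_left _ (List.mem_append_right _ h))
    have himg : (u.map (fun a => if a ∈ L₂ then y else x)).destutter (· ≠ ·) = [x, y, x] := by
      rw [hdecomp]
      exact img_destutter hp hq hBm L₁ L₂ L₃ hs h2ne hyx (if_neg hxL₂)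
        (fun a ha => if_neg (fun h => hd12 _ ha _ h rfl)) (fun a ha => if_pos ha)
        (fun a ha => if_neg (fun hmem => hd123 _ (List.mem_append_right _ hmem) _ ha rfl))
    have hv' : (v.map (fun a => if a ∈ L₂ then y else x)).destutter (· ≠ ·) = [x, y, x] := by
      have hk := key_extract (d := [x, y, x]) hC3 hSat (fun a => [if a ∈ L₂ then y else x]) (fun a => by simp)
        (Ne.symm hyx) (by rw [subst_single]; exact himg)
        (by intro c hc; simp at hc; tauto) (by simp) (by simp)
      rwa [subst_single] at hk
    obtain ⟨w₁, w₂, w₃, hweq, h1, h2, h3, hq1, hq2, hq3⟩ := decode3 hv'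
    refine ⟨w₁, w₂, w₃, hweq, h1, h2, h3, ?_, ?_, ?_⟩
    · intro a ha hmem
      have hh := hq1 a ha; rw [if_pos hmem] at hh; exact hyx hh
    · intro a ha
      by_contra hmem
      have hh := hq2 a ha; rw [if_neg hmem] at hh; exact hyx hh.symm
    · intro a ha hmem
      have hh := hq3 a ha; rw [if_pos hmem] at hh; exact hyx hh
  -- D is a sublist of v
  have hsubD : D.Sublist v := by
    have h1 : D.Sublist C := List.destutter_sublist (· ≠ ·) C
    have h2 : C.Sublist v := by
      rw [hveq, List.append_assoc]
      exact (List.sublist_append_left C X₂).trans (List.sublist_append_right X₁ _)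
    exact h1.trans h2
  have splitD : ∀ (w₁ w₂ w₃ : Word), v = w₁ ++ w₂ ++ w₃ →
      ∃ d₁ d₂ d₃, D = d₁ ++ d₂ ++ d₃ ∧ d₁.Sublist w₁ ∧ d₂.Sublist w₂ ∧ d₃.Sublist w₃ := by
    intro w₁ w₂ w₃ hweq
    have h := hsubD
    rw [hweq] at h
    obtain ⟨d₁₂, d₃, hD3, h12, h3⟩ := List.sublist_append_iff.mp h
    obtain ⟨d₁, d₂, hD12, h1, h2⟩ := List.sublist_append_iff.mp h12
    exact ⟨d₁, d₂, d₃, by rw [hD3, hD12], h1, h2, h3⟩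
  -- membership
  have hmemD : ∀ a, a ∈ D ↔ a ∈ L := by
    intro a
    constructor
    · intro haD
      have haC : a ∈ C := hDmemC a haD
      by_contra haL
      have hax : a ≠ x := hCx a haC
      have himg : (u.map (fun b => if b = a then c₀ else x)).destutter (· ≠ ·) = [x] := by
        have hmap : u.map (fun b => if b = a then c₀ else x) = List.replicate u.length x := by
          apply map_eq_replicate
          intro b hb
          apply if_neg
          intro hba
          rw [hba] at hb
          have hmem := (hBu.mem_iff a).mp hb
          simp at hmem
          have hmem' : a = x ∨ a ∈ L := by tauto
          rcases hmem' with h | h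
          · exact hax h
          · exact haL h
        rw [hmap]
        exact (blk_replicate hulen x).destutter_eq
      have hv' : (v.map (fun b => if b = a then c₀ else x)).destutter (· ≠ ·) = [x] := by
        have hk := key_extract (d := [x]) hC3 hSat (fun b => [if b = a then c₀ else x]) (fun b => by simp)
          (Ne.symm hc₀x) (by rw [subst_single]; exact himg)
          (by intro c hc; simp at hc; simp [hc]) (by simp) (by simp)
        rwa [subst_single] at hk
      have haV : a ∈ v := by
        rw [hveq]; exact List.mem_append_left _ (List.mem_append_right _ haC)
      have hcv : c₀ ∈ v.map (fun b => if b = a then c₀ else x) :=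
        List.mem_map.mpr ⟨a, haV, by simp⟩
      have hmem := ((blk_destutter _).mem_iff c₀).mp hcv
      rw [hv'] at hmem
      simp at hmem
      exact hc₀x hmem
    · intro haL
      obtain ⟨L₁, L₃, hs⟩ := List.append_of_mem haL
      obtain ⟨w₁, w₂, w₃, hweq, -, h2, -, -, hq2, -⟩ :=
        contig L₁ [a] L₃ (by rw [hs]; simp) (by simp)
      obtain ⟨e, he⟩ := List.exists_mem_of_ne_nil w₂ h2
      have hea : e = a := by simpa using hq2 e he
      have hav : a ∈ v := by
        rw [hweq]; exact List.mem_append_left _ (List.mem_append_right _ (hea ▸ he))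
      have hax : a ≠ x := fun h => hxL (h ▸ haL)
      rw [hveq] at hav
      rcases List.mem_append.mp hav with h | h
      · rcases List.mem_append.mp h with h | h
        · exact absurd (hX₁x a h) hax
        · exact (hBC.mem_iff a).mp h
      · exact absurd (hX₂x a h) hax
  -- D has no duplicates
  have hDnd : D.Nodup := by
    rw [List.nodup_iff_count_le_one]
    intro a
    by_cases haD : a ∈ D
    · have haL := (hmemD a).mp haD
      obtain ⟨L₁, L₃, hs⟩ := List.append_of_mem haL
      obtain ⟨w₁, w₂, w₃, hweq, -, -, -, hq1, hq2, hq3⟩ :=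
        contig L₁ [a] L₃ (by rw [hs]; simp) (by simp)
      obtain ⟨d₁, d₂, d₃, hDeq, hs1, hs2, hs3⟩ := splitD w₁ w₂ w₃ hweq
      have hc1 : d₁.count a = 0 :=
        List.count_eq_zero.mpr (fun h => (hq1 a (hs1.subset h)) (by simp))
      have hc3 : d₃.count a = 0 :=
        List.count_eq_zero.mpr (fun h => (hq3 a (hs3.subset h)) (by simp))
      have hall : ∀ e ∈ d₂, e = a := fun e he => by simpa using hq2 e (hs2.subset he)
      have hch2 : d₂.Chain' (· ≠ ·) := List.IsChain.infix hDch ⟨d₁, d₃, hDeq.symm⟩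
      have hlen2 : d₂.length ≤ 1 := chain_all_eq_short hch2 hall
      rw [hDeq, List.count_append, List.count_append, hc1, hc3]
      have := List.count_le_length (a := a) (l := d₂)
      omega
    · rw [List.count_eq_zero.mpr haD]
      omega
  -- the combinatorial hypothesis
  have hHyp : Hyp L D := by
    intro L₁ L₂ L₃ hs
    by_cases h2 : L₂ = []
    · exact ⟨D, [], [], by simp, fun a _ => by simp [h2], by simp, by simp⟩
    · obtain ⟨w₁, w₂, w₃, hweq, -, -, -, hq1, hq2, hq3⟩ := contig L₁ L₂ L₃ hs h2
      obtain ⟨d₁, d₂, d₃, hDeq, hs1, hs2, hs3⟩ := splitD w₁ w₂ w₃ hweq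
      exact ⟨d₁, d₂, d₃, hDeq, fun a ha => hq1 a (hs1.subset ha),
        fun a ha => hq2 a (hs2.subset ha), fun a ha => hq3 a (hs3.subset ha)⟩
  rcases pc L D hLnd hDnd hmemD hHyp with hDL | hDrev
  · exact hDL
  · by_cases hpal : L.reverse = L
    · rw [hpal] at hDrev; exact hDrev
    · exfalso
      have htc : L.count t = 1 := List.count_eq_one_of_mem hLnd htL
      obtain ⟨L₁, L₂, hLt, htL₁, htL₂⟩ := count_one_split htc
      cases hL₂ : L₂ with
      | cons c L₂'' =>
          -- the linear variable is not last : use Θ t = [x, c]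
          have hLre : L = (L₁ ++ [t]) ++ ([c] ++ L₂'') := by rw [hLt, hL₂]; simp
          have hcL : c ∈ L := by rw [hLre]; simp
          have hcx : c ≠ x := fun h => hxL (h ▸ hcL)
          have hct : c ≠ t := fun h => htL₂ (by rw [hL₂]; simp [h])
          have hndL' : ((L₁ ++ [t]) ++ ([c] ++ L₂'')).Nodup := hLre ▸ hLnd
          rw [List.nodup_append] at hndL'
          obtain ⟨-, hnd2, hdsj⟩ := hndL'
          rw [List.nodup_append] at hnd2
          obtain ⟨-, -, hdsj2⟩ := hnd2
          have hcL₁ : c ∉ L₁ := fun h => hdsj _ (List.mem_append_left _ h) _ (by simp) rfl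
          have hcL₂'' : c ∉ L₂'' := fun h => hdsj2 _ (by simp) _ h rfl
          set Θ : Var → Word := fun a => if a = t then [x, c] else if a = c then [c] else [x]
            with hΘdef
          have hΘt : Θ t = [x, c] := by rw [hΘdef]; simp
          have hΘc : Θ c = [c] := by rw [hΘdef]; simp [hct]
          have hΘo : ∀ a, a ≠ t → a ≠ c → Θ a = [x] := by
            intro a h1 h2; rw [hΘdef]; simp [h1, h2]
          have hΘx : Θ x = [x] := hΘo x hxt (fun h => hcx h.symm)
          have hΘne : ∀ a, Θ a ≠ [] := by
            intro a
            by_cases h1 : a = t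
            · rw [hΘdef]; simp [h1]
            · by_cases h2 : a = c
              · rw [hΘdef]; simp [h1, h2, hct]
              · rw [hΘo a h1 h2]; simp
          have hBm' : Blk m ((L₁ ++ [t]) ++ ([c] ++ L₂'')) := by rw [← hLre]; exact hBm
          obtain ⟨m₁t, m₂, hm0, hb1t, hb2⟩ := hBm'.split
          obtain ⟨m₁, mt, hm1e, hbm₁, hbmt⟩ := hb1t.split
          obtain ⟨mc, m₂', hm2e, hbmc, hbm₂'⟩ := hb2.split
          obtain ⟨kt, hktpos, hmt⟩ := hbmt.singleton_inv
          obtain ⟨e, hepos, hmc⟩ := hbmc.singleton_inv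
          have hm₁t : t ∉ m₁ := fun h => htL₁ ((hbm₁.mem_iff t).mp h)
          have hm₁c : c ∉ m₁ := fun h => hcL₁ ((hbm₁.mem_iff c).mp h)
          have hm₂'t : t ∉ m₂' := fun h =>
            htL₂ (by rw [hL₂]; exact List.mem_cons_of_mem _ ((hbm₂'.mem_iff t).mp h))
          have hm₂'c : c ∉ m₂' := fun h => hcL₂'' ((hbm₂'.mem_iff c).mp h)
          have hkt1 : kt = 1 := by
            have hc' := htm1
            rw [hm0, hm1e, hm2e, hmt, hmc] at hc'
            have hz1 : m₁.count t = 0 := List.count_eq_zero.mpr hm₁t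
            have hz2 : m₂'.count t = 0 := List.count_eq_zero.mpr hm₂'t
            have htc : t ≠ c := fun h => hct h.symm
            simp [List.count_append, List.count_replicate, hz1, hz2, htc] at hc'
            omega
          have hsu : subst Θ u = List.replicate (p + m₁.length + 1) x ++
              (List.replicate (1 + e) c ++ List.replicate (m₂'.length + q) x) := by
            rw [hdecomp, hm0, hm1e, hm2e, hmt, hmc, hkt1]
            simp only [subst_append]
            rw [subst_all (w := List.replicate p x)
                (fun a ha => by rw [List.eq_of_mem_replicate ha]; exact hΘx),
              subst_all (w := m₁) (fun a ha => hΘo a (fun h => hm₁t (h ▸ ha))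
                (fun h => hm₁c (h ▸ ha))),
              show subst Θ (List.replicate 1 t) = [x, c] from
                (by rw [List.replicate_one, subst_cons, hΘt]; rfl),
              subst_all (w := List.replicate e c)
                (fun a ha => by rw [List.eq_of_mem_replicate ha]; exact hΘc),
              subst_all (w := m₂') (fun a ha => hΘo a (fun h => hm₂'t (h ▸ ha))
                (fun h => hm₂'c (h ▸ ha))),
              subst_all (w := List.replicate q x)
                (fun a ha => by rw [List.eq_of_mem_replicate ha]; exact hΘx)]
            simp only [List.replicate_add, List.replicate_one, List.length_replicate, List.append_assoc, List.cons_append,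
      List.singleton_append, List.nil_append]
          have hdu' : (subst Θ u).destutter (· ≠ ·) = [x, c, x] := by
            rw [hsu]
            have B3 : Blk (List.replicate (m₂'.length + q) x) [x] := blk_replicate (by omega) x
            have B2 : Blk (List.replicate (1 + e) c ++ List.replicate (m₂'.length + q) x)
                [c, x] := Blk.cons (1 + e) c (by omega)
              (by intro d hd; simp only [List.head?_cons, Option.some.injEq] at hd
                  rw [← hd]; exact Ne.symm hcx) B3
            exact (Blk.cons _ x (by omega)
              (by intro d hd; simp only [List.head?_cons, Option.some.injEq] at hd
                  rw [← hd]; exact hcx) B2).destutter_eq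
          have hvd := key_extract (d := [x, c, x]) hC3 hSat Θ hΘne (Ne.symm hcx) hdu'
            (by intro c' hc'; simp at hc'; tauto) (by simp) (by simp)
          -- the v side under the reversal assumption
          have hDeq2 : D = L₂''.reverse ++ ([c] ++ ([t] ++ L₁.reverse)) := by
            rw [hDrev, hLt, hL₂]
            simp [List.reverse_append, List.append_assoc]
          have hBC2 : Blk C (L₂''.reverse ++ ([c] ++ ([t] ++ L₁.reverse))) := by
            rw [← hDeq2]; exact hBC
          obtain ⟨A, C2, hc0, hbA, hbC2⟩ := hBC2.split
          obtain ⟨Bc, C3, hc1, hbB, hbC3⟩ := hbC2.split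
          obtain ⟨Et, Fw, hc2, hbE, hbF⟩ := hbC3.split
          obtain ⟨e', he'pos, hBce⟩ := hbB.singleton_inv
          obtain ⟨f, hfpos, hEf⟩ := hbE.singleton_inv
          have hAx : ∀ a ∈ A, Θ a = [x] := by
            intro a ha
            have haM : a ∈ L₂'' := List.mem_reverse.mp ((hbA.mem_iff a).mp ha)
            exact hΘo a (fun h => htL₂ (by rw [hL₂]; exact List.mem_cons_of_mem _ (h ▸ haM)))
              (fun h => hcL₂'' (h ▸ haM))
          have hFx : ∀ a ∈ Fw, Θ a = [x] := by
            intro a ha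
            have haL₁ : a ∈ L₁ := List.mem_reverse.mp ((hbF.mem_iff a).mp ha)
            exact hΘo a (fun h => htL₁ (h ▸ haL₁)) (fun h => hcL₁ (h ▸ haL₁))
          have hX₁Θ : ∀ a ∈ X₁, Θ a = [x] := fun a ha => by rw [hX₁x a ha]; exact hΘx
          have hX₂Θ : ∀ a ∈ X₂, Θ a = [x] := fun a ha => by rw [hX₂x a ha]; exact hΘx
          have hsv : subst Θ v = List.replicate (X₁.length + A.length) x ++
              (List.replicate e' c ++
                (altW x c f ++ List.replicate (Fw.length + X₂.length) x)) := by
            rw [hveq, hc0, hc1, hc2, hBce, hEf]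
            simp only [subst_append]
            rw [subst_all (w := X₁) hX₁Θ, subst_all (w := A) hAx,
              subst_all (w := List.replicate e' c)
                (fun a ha => by rw [List.eq_of_mem_replicate ha]; exact hΘc),
              subst_replicate_pair Θ t x c hΘt f,
              subst_all (w := Fw) hFx, subst_all (w := X₂) hX₂Θ]
            simp only [List.replicate_add, List.replicate_one, List.length_replicate, List.append_assoc, List.cons_append,
      List.singleton_append, List.nil_append]
          obtain ⟨f', rfl⟩ : ∃ f', f = f' + 1 := ⟨f - 1, by omega⟩
          have hvd2 : (subst Θ v).destutter (· ≠ ·) =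
              x :: (c :: (altW x c (f' + 1) ++ [x])) := by
            rw [hsv]
            have Balt : Blk (altW x c (f' + 1) ++ List.replicate (Fw.length + X₂.length) x)
                (altW x c (f' + 1) ++ [x]) :=
              blk_altW x c (Ne.symm hcx)
                (blk_replicate (by have := List.length_pos_iff.mpr hX₂ne; omega) x)
                (by intro d hd; simp only [List.head?_cons, Option.some.injEq] at hd
                    rw [← hd]; exact Ne.symm hcx) (f' + 1)
            have Bc2 := Blk.cons e' c he'pos ?_ Balt
            · exact (Blk.cons _ x (by have := List.length_pos_iff.mpr hX₁ne; omega)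
                (by intro d hd; simp only [List.head?_cons, Option.some.injEq] at hd
                    rw [← hd]; exact hcx) Bc2).destutter_eq
            · intro d hd
              simp only [altW, List.cons_append, List.head?_cons, Option.some.injEq] at hd
              rw [← hd]; exact Ne.symm hcx
          rw [hvd] at hvd2
          have hle := congrArg List.length hvd2
          simp [altW_length] at hle
      | nil =>
          rcases List.eq_nil_or_concat L₁ with h1 | ⟨L₁'', c, h1⟩
          · apply hpal
            rw [hLt, h1, hL₂]
            simp
          · rw [List.concat_eq_append] at h1
            have hLre : L = L₁'' ++ ([c] ++ [t]) := by rw [hLt, h1, hL₂]; simp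
            have hcL : c ∈ L := by rw [hLre]; simp
            have hcx : c ≠ x := fun h => hxL (h ▸ hcL)
            have hct : c ≠ t := fun h =>
              htL₁ (by rw [h1, h]; exact List.mem_append_right _ (by simp))
            have hndL' : (L₁'' ++ ([c] ++ [t])).Nodup := hLre ▸ hLnd
            rw [List.nodup_append] at hndL'
            obtain ⟨-, -, hdsj⟩ := hndL'
            have hcL₁'' : c ∉ L₁'' := fun h => hdsj _ h _ (by simp) rfl
            have htL₁'' : t ∉ L₁'' := fun h => htL₁ (by rw [h1]; exact List.mem_append_left _ h)
            set Θ : Var → Word := fun a => if a = t then [c, x] else if a = c then [c] else [x]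
              with hΘdef
            have hΘt : Θ t = [c, x] := by rw [hΘdef]; simp
            have hΘc : Θ c = [c] := by rw [hΘdef]; simp [hct]
            have hΘo : ∀ a, a ≠ t → a ≠ c → Θ a = [x] := by
              intro a h1' h2'; rw [hΘdef]; simp [h1', h2']
            have hΘx : Θ x = [x] := hΘo x hxt (fun h => hcx h.symm)
            have hΘne : ∀ a, Θ a ≠ [] := by
              intro a
              by_cases h1' : a = t
              · rw [hΘdef]; simp [h1']
              · by_cases h2' : a = c
                · rw [hΘdef]; simp [h1', h2', hct]
                · rw [hΘo a h1' h2']; simp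
            have hBm' : Blk m (L₁'' ++ ([c] ++ [t])) := by rw [← hLre]; exact hBm
            obtain ⟨m₁', mrest, hm0, hbm₁, hbrest⟩ := hBm'.split
            obtain ⟨mc, mt, hm1e, hbmc, hbmt⟩ := hbrest.split
            obtain ⟨e, hepos, hmc⟩ := hbmc.singleton_inv
            obtain ⟨kt, hktpos, hmt⟩ := hbmt.singleton_inv
            have hm₁t : t ∉ m₁' := fun h => htL₁'' ((hbm₁.mem_iff t).mp h)
            have hm₁c : c ∉ m₁' := fun h => hcL₁'' ((hbm₁.mem_iff c).mp h)
            have hkt1 : kt = 1 := by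
              have hc' := htm1
              rw [hm0, hm1e, hmc, hmt] at hc'
              have hz1 : m₁'.count t = 0 := List.count_eq_zero.mpr hm₁t
              have htc : t ≠ c := fun h => hct h.symm
              simp [List.count_append, List.count_replicate, hz1, htc] at hc'
              omega
            have hsu : subst Θ u = List.replicate (p + m₁'.length) x ++
                (List.replicate (e + 1) c ++ List.replicate (1 + q) x) := by
              rw [hdecomp, hm0, hm1e, hmc, hmt, hkt1]
              simp only [subst_append]
              rw [subst_all (w := List.replicate p x)
                  (fun a ha => by rw [List.eq_of_mem_replicate ha]; exact hΘx),
                subst_all (w := m₁') (fun a ha => hΘo a (fun h => hm₁t (h ▸ ha))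
                  (fun h => hm₁c (h ▸ ha))),
                subst_all (w := List.replicate e c)
                  (fun a ha => by rw [List.eq_of_mem_replicate ha]; exact hΘc),
                show subst Θ (List.replicate 1 t) = [c, x] from
                  (by rw [List.replicate_one, subst_cons, hΘt]; rfl),
                subst_all (w := List.replicate q x)
                  (fun a ha => by rw [List.eq_of_mem_replicate ha]; exact hΘx)]
              simp only [List.replicate_add, List.replicate_one, List.length_replicate, List.append_assoc, List.cons_append,
      List.singleton_append, List.nil_append]
            have hdu' : (subst Θ u).destutter (· ≠ ·) = [x, c, x] := by
              rw [hsu]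
              have B3 : Blk (List.replicate (1 + q) x) [x] := blk_replicate (by omega) x
              have B2 : Blk (List.replicate (e + 1) c ++ List.replicate (1 + q) x)
                  [c, x] := Blk.cons (e + 1) c (by omega)
                (by intro d hd; simp only [List.head?_cons, Option.some.injEq] at hd
                    rw [← hd]; exact Ne.symm hcx) B3
              exact (Blk.cons _ x (by omega)
                (by intro d hd; simp only [List.head?_cons, Option.some.injEq] at hd
                    rw [← hd]; exact hcx) B2).destutter_eq
            have hvd := key_extract (d := [x, c, x]) hC3 hSat Θ hΘne (Ne.symm hcx) hdu'
              (by intro c' hc'; simp at hc'; tauto) (by simp) (by simp)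
            have hDeq2 : D = [t] ++ ([c] ++ L₁''.reverse) := by
              rw [hDrev, hLt, hL₂, h1]
              simp [List.reverse_append, List.append_assoc]
            have hBC2 : Blk C ([t] ++ ([c] ++ L₁''.reverse)) := by
              rw [← hDeq2]; exact hBC
            obtain ⟨Et, C2, hc0, hbE, hbC2⟩ := hBC2.split
            obtain ⟨Bc, Fw, hc1, hbB, hbF⟩ := hbC2.split
            obtain ⟨f, hfpos, hEf⟩ := hbE.singleton_inv
            obtain ⟨e', he'pos, hBce⟩ := hbB.singleton_inv
            have hFx : ∀ a ∈ Fw, Θ a = [x] := by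
              intro a ha
              have haL₁ : a ∈ L₁'' := List.mem_reverse.mp ((hbF.mem_iff a).mp ha)
              exact hΘo a (fun h => htL₁'' (h ▸ haL₁)) (fun h => hcL₁'' (h ▸ haL₁))
            have hX₁Θ : ∀ a ∈ X₁, Θ a = [x] := fun a ha => by rw [hX₁x a ha]; exact hΘx
            have hX₂Θ : ∀ a ∈ X₂, Θ a = [x] := fun a ha => by rw [hX₂x a ha]; exact hΘx
            have hsv : subst Θ v = List.replicate X₁.length x ++
                (altW c x f ++ (List.replicate e' c ++
                  List.replicate (Fw.length + X₂.length) x)) := by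
              rw [hveq, hc0, hc1, hEf, hBce]
              simp only [subst_append]
              rw [subst_all (w := X₁) hX₁Θ,
                subst_replicate_pair Θ t c x hΘt f,
                subst_all (w := List.replicate e' c)
                  (fun a ha => by rw [List.eq_of_mem_replicate ha]; exact hΘc),
                subst_all (w := Fw) hFx, subst_all (w := X₂) hX₂Θ]
              simp only [List.replicate_add, List.replicate_one, List.length_replicate, List.append_assoc, List.cons_append,
      List.singleton_append, List.nil_append]
            obtain ⟨f', rfl⟩ : ∃ f', f = f' + 1 := ⟨f - 1, by omega⟩
            have hvd2 : (subst Θ v).destutter (· ≠ ·) =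
                x :: (altW c x (f' + 1) ++ [c, x]) := by
              rw [hsv]
              have Bcx : Blk (List.replicate e' c ++
                  List.replicate (Fw.length + X₂.length) x) [c, x] :=
                Blk.cons e' c he'pos
                  (by intro d hd; simp only [List.head?_cons, Option.some.injEq] at hd
                      rw [← hd]; exact Ne.symm hcx)
                  (blk_replicate (by have := List.length_pos_iff.mpr hX₂ne; omega) x)
              have Balt := blk_altW c x hcx Bcx
                (by intro d hd; simp only [List.head?_cons, Option.some.injEq] at hd
                    rw [← hd]; exact hcx) (f' + 1)
              exact (Blk.cons _ x (by have := List.length_pos_iff.mpr hX₁ne; omega)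
                (by intro d hd
                    simp only [altW, List.cons_append, List.head?_cons,
                      Option.some.injEq] at hd
                    rw [← hd]; exact hcx) Balt).destutter_eq
            rw [hvd] at hvd2
            have hle := congrArg List.length hvd2
            simp [altW_length] at hle
end

section
/- Let M be a monoid that satisfies Property (C₃) and suppose M satisfies an identity u ≈ v. Then: (i) lin(u) = lin(v), non(u) = non(v), and the linear variables occur in v in the same order as in u; (ii) the corresponding blocks of u and v have the same content; that is, if u = a₀t₁a₁t₂⋯t_{m−1}a_{m−1}t_m a_m, where t₁,…,t_m are the linear variables of u (in order of occurrence) and a₀,…,a_m are possibly empty words over the non-linear variables of u, then v = b₀t₁b₁t₂⋯t_{m−1}b_{m−1}t_m b_m with con(a_q) = con(b_q) for each 0 ≤ q ≤ m. -/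
section Helpers
open List

def ileave : List Word → List Var → Word
  | [], _ => []
  | a :: _, [] => a
  | a :: as, t :: ts => a ++ t :: ileave as ts

lemma subst_nil (Θ : Var → Word) : subst Θ [] = [] := rfl
lemma subst_cons (Θ : Var → Word) (c l) : subst Θ (c :: l) = Θ c ++ subst Θ l := rfl
lemma subst_append (Θ : Var → Word) (l₁ l₂ : Word) :
    subst Θ (l₁ ++ l₂) = subst Θ l₁ ++ subst Θ l₂ := by
  simp [subst]

lemma prod_subst {M : Type} [Monoid M] (φ : Var → M) (Θ : Var → Word) (u : Word) :
    ((subst Θ u).map φ).prod = (u.map fun c => ((Θ c).map φ).prod).prod := by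
  induction u with
  | nil => rfl
  | cons c l ih => simp [subst_cons, ih]

lemma MSat.subst' {M : Type} [Monoid M] {u v : Word} (h : MSat M u v) (Θ : Var → Word) :
    MSat M (subst Θ u) (subst Θ v) := fun φ => by
  rw [prod_subst, prod_subst]; exact h _

lemma subst_single {Θ : Var → Word} {x : Var} : ∀ {w : Word},
    (∀ c ∈ w, Θ c = if c = x then [x] else []) →
    subst Θ w = List.replicate (w.count x) x := by
  intro w
  induction w with
  | nil => intro; rfl
  | cons c l ih =>
    intro hc
    rw [subst_cons, hc c (mem_cons_self), ih fun d hd => hc d (mem_cons_of_mem _ hd)]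
    by_cases h : c = x
    · subst h; simp [List.count_cons, List.replicate_succ]
    · simp [List.count_cons, Ne.symm h, h]

lemma subst_filter {p : Var → Bool} : ∀ {w : Word},
    subst (fun c => if p c then [c] else []) w = w.filter p := by
  intro w
  induction w with
  | nil => rfl
  | cons c l ih =>
    rw [subst_cons, ih]
    by_cases h : p c <;> simp [h]

lemma subst_pump {x : Var} {r : Word} : ∀ {w : Word},
    subst (fun c => if c = x then r else []) w = (List.replicate (w.count x) r).flatten := by
  intro w
  induction w with
  | nil => rfl
  | cons c l ih =>
    rw [subst_cons, ih]
    by_cases h : c = x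
    · subst h; simp [List.count_cons, List.replicate_succ]
    · simp [List.count_cons, h, Ne.symm h]

lemma mem_subst {Θ : Var → Word} {w : Word} {c : Var} (h : c ∈ subst Θ w) :
    ∃ d ∈ w, c ∈ Θ d := by
  simpa [subst] using h

-- ileave lemmas
lemma ileave_cons (a : Word) (as : List Word) (t : Var) (ts : List Var) :
    ileave (a :: as) (t :: ts) = a ++ t :: ileave as ts := rfl

lemma mem_ileave {c : Var} : ∀ {as : List Word} {ts : List Var},
    c ∈ ileave as ts → (∃ a ∈ as, c ∈ a) ∨ c ∈ ts := by
  intro as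
  induction as with
  | nil => intro ts h; simp [ileave] at h
  | cons a as ih =>
    intro ts h
    cases ts with
    | nil => exact Or.inl ⟨a, by simp, h⟩
    | cons t ts =>
      rw [ileave_cons, mem_append, mem_cons] at h
      rcases h with h | h | h
      · exact Or.inl ⟨a, by simp, h⟩
      · exact Or.inr (by simp [h])
      · rcases ih h with ⟨b, hb, hc⟩ | h
        · exact Or.inl ⟨b, by simp [hb], hc⟩
        · exact Or.inr (by simp [h])

lemma mem_ileave_of_block {c : Var} : ∀ {as : List Word} {ts : List Var},
    as.length = ts.length + 1 → ∀ b ∈ as, c ∈ b → c ∈ ileave as ts := by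
  intro as
  induction as with
  | nil => simp
  | cons a as ih =>
    intro ts hlen b hb hc
    cases ts with
    | nil =>
      simp at hlen
      rcases mem_cons.1 hb with rfl | hb
      · exact hc
      · simp [hlen] at hb
    | cons t ts =>
      rw [ileave_cons, mem_append, mem_cons]
      rcases mem_cons.1 hb with rfl | hb
      · exact Or.inl hc
      · exact Or.inr (Or.inr (ih (by simpa using hlen) b hb hc))

lemma sublist_ileave : ∀ {as : List Word} {ts : List Var},
    as.length = ts.length + 1 → ts <+ ileave as ts := by
  intro as
  induction as with
  | nil => simp
  | cons a as ih =>
    intro ts hlen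
    cases ts with
    | nil => simp
    | cons t ts =>
      rw [ileave_cons]
      exact ((ih (by simpa using hlen)).cons₂ t).trans (sublist_append_right a _)

lemma ileave_split₂ {t : Var} : ∀ {A : List Word} {C : List Var}, A.length = C.length + 1 →
    ∀ (B : List Word) (D : List Var),
    ileave (A ++ B) (C ++ t :: D) = ileave A C ++ t :: ileave B D := by
  intro A
  induction A with
  | nil => simp
  | cons a A ih =>
    intro C hlen B D
    cases C with
    | nil =>
      simp at hlen
      subst hlen
      simp [ileave_cons, ileave]
    | cons c C =>
      rw [cons_append, cons_append, ileave_cons, ileave_cons,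
        ih (by simpa using hlen) B D]
      simp

lemma filter_ileave {p : Var → Bool} : ∀ {as : List Word} {ts : List Var},
    as.length = ts.length + 1 → (∀ a ∈ as, a.filter p = []) →
    (ileave as ts).filter p = ts.filter p := by
  intro as
  induction as with
  | nil => simp
  | cons a as ih =>
    intro ts hlen ha
    cases ts with
    | nil => simp [ileave, ha a (by simp)]
    | cons t ts =>
      rw [ileave_cons, filter_append, ha a (by simp), filter_cons]
      by_cases h : p t <;>
        simp [h, ih (by simpa using hlen) fun b hb => ha b (by simp [hb])]

-- destutter toolkit for R = (· ≠ ·)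
lemma drun {x : Var} : ∀ (k : ℕ) (l : Word),
    List.destutter' (· ≠ ·) x (List.replicate k x ++ l) = List.destutter' (· ≠ ·) x l := by
  intro k
  induction k with
  | zero => simp
  | succ k ih =>
    intro l
    have hxx : ¬ (x ≠ x) := by simp
    rw [List.replicate_succ, cons_append, List.destutter'_cons_neg _ hxx, ih]

lemma dpos {x y : Var} (h : x ≠ y) (l : Word) :
    List.destutter' (· ≠ ·) x (y :: l) = x :: List.destutter' (· ≠ ·) y l :=
  List.destutter'_cons_pos _ h

lemma dnil {x : Var} : List.destutter' (· ≠ ·) x ([] : Word) = [x] := rfl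

lemma drep {x : Var} (k : ℕ) :
    List.destutter' (· ≠ ·) x (List.replicate k x) = [x] := by
  have := drun (x := x) k []
  simpa using this

-- pattern: x^p ++ y :: x^c  (p may be 0, c ≥ 1)
lemma pat_edgeL {x y : Var} (h : x ≠ y) (p c : ℕ) :
    (List.replicate p x ++ y :: List.replicate (c+1) x).destutter (· ≠ ·)
      = if p = 0 then [y, x] else [x, y, x] := by
  have tail : List.destutter' (· ≠ ·) y (List.replicate (c+1) x) = [y, x] := by
    rw [List.replicate_succ, dpos (Ne.symm h), drep]
  cases p with
  | zero => simpa [List.destutter_cons'] using tail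
  | succ p =>
    rw [List.replicate_succ, cons_append, List.destutter_cons', drun, dpos h, tail]
    simp

-- pattern: x^c ++ y :: x^p  (c ≥ 1, p may be 0)
lemma pat_edgeR {x y : Var} (h : x ≠ y) (c p : ℕ) :
    (List.replicate (c+1) x ++ y :: List.replicate p x).destutter (· ≠ ·)
      = if p = 0 then [x, y] else [x, y, x] := by
  rw [List.replicate_succ, cons_append, List.destutter_cons', drun, dpos h]
  cases p with
  | zero => simp [dnil]
  | succ p =>
    rw [List.replicate_succ, dpos (Ne.symm h), drep]
    simp

-- pattern: x^a ++ y :: x^p ++ y :: x^b  with a,b ≥ 1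
lemma pat_mid {x y : Var} (h : x ≠ y) (a p b : ℕ) :
    (List.replicate (a+1) x ++ y :: (List.replicate p x ++ y :: List.replicate (b+1) x)).destutter (· ≠ ·)
      = if p = 0 then [x, y, x] else [x, y, x, y, x] := by
  rw [List.replicate_succ, cons_append, List.destutter_cons', drun, dpos h]
  have tail : List.destutter' (· ≠ ·) y (List.replicate (b+1) x) = [y, x] := by
    rw [List.replicate_succ, dpos (Ne.symm h), drep]
  cases p with
  | zero =>
    have hyy : ¬ (y ≠ y) := by simp
    rw [show List.replicate 0 x ++ y :: List.replicate (b+1) x = y :: List.replicate (b+1) x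
      by simp, List.destutter'_cons_neg _ hyy, tail]
    simp
  | succ p =>
    rw [List.replicate_succ, cons_append, dpos (Ne.symm h), drun, dpos h, tail]
    simp

lemma drep_destutter {x : Var} (k : ℕ) :
    (List.replicate (k+1) x).destutter (· ≠ ·) = [x] := by
  rw [List.replicate_succ, List.destutter_cons', drep]

-- alternating word
lemma chain'_alt {x y : Var} (h : x ≠ y) : ∀ k,
    ((List.replicate k ([x, y] : Word)).flatten).Chain' (· ≠ ·) ∧
    ∀ c ≠ x, ((c :: (List.replicate k ([x, y] : Word)).flatten)).Chain' (· ≠ ·) := by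
  intro k
  induction k with
  | zero => simp [List.Chain']
  | succ k ih =>
    rw [List.replicate_succ, List.flatten_cons]
    constructor
    · exact (List.isChain_cons_cons.2 ⟨h, (ih.2 y (Ne.symm h))⟩)
    · intro c hc
      exact List.isChain_cons_cons.2 ⟨hc, List.isChain_cons_cons.2 ⟨h, ih.2 y (Ne.symm h)⟩⟩

lemma alt_eq_pair {x y : Var} (h : x ≠ y) {k : ℕ}
    (hk : ((List.replicate k ([x, y] : Word)).flatten).destutter (· ≠ ·) = [x, y]) :
    k = 1 := by
  rw [List.destutter_of_isChain _ _ (chain'_alt h k).1] at hk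
  match k, hk with
  | 1, _ => rfl

lemma flat_single {x : Var} (k : ℕ) :
    (List.replicate k ([x] : Word)).flatten = List.replicate k x := by
  induction k with
  | zero => rfl
  | succ k ih => simp [List.replicate_succ, ih]

lemma con_count {M : Type} [Monoid M] (hC3 : MPropC M 3) {u v : Word} (h : MSat M u v)
    {x : Var} (hx : 0 < u.count x) : 0 < v.count x := by
  have h' := h.subst' (fun c => if c = x then [x] else [])
  rw [subst_pump, subst_pump, flat_single, flat_single] at h'
  have hst := hC3 x (x+1) (by simp) (List.replicate (u.count x) x) (by
      intro hc
      rw [← List.length_eq_zero_iff] at hc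
      simp at hc
      omega)
    (fun c hc => Or.inl (List.eq_of_mem_replicate hc))
    (by
      obtain ⟨k, hk⟩ : ∃ k, u.count x = k + 1 := ⟨u.count x - 1, by omega⟩
      rw [height, hk, drep_destutter]
      simp) _ h'
  unfold sameType at hst
  obtain ⟨k, hk⟩ : ∃ k, u.count x = k + 1 := ⟨u.count x - 1, by omega⟩
  rw [hk, drep_destutter] at hst
  rcases Nat.eq_zero_or_pos (v.count x) with h0 | h0
  · rw [h0] at hst; simp at hst
  · exact h0

lemma lin_count {M : Type} [Monoid M] (hC3 : MPropC M 3) {u v : Word} (h : MSat M u v)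
    {x : Var} (hx : u.count x = 1) : v.count x = 1 := by
  have hxy : x ≠ x + 1 := by simp
  have h' := h.subst' (fun c => if c = x then [x, x+1] else [])
  rw [subst_pump, subst_pump, hx] at h'
  have h1 : (List.replicate 1 ([x, x+1] : Word)).flatten = [x, x+1] := by simp
  rw [h1] at h'
  have hst := hC3 x (x+1) hxy [x, x+1] (by simp) (by
      intro c hc
      rcases List.mem_cons.1 hc with rfl | hc
      · exact Or.inl rfl
      · simp at hc; exact Or.inr hc)
    (by
      rw [height]
      have : ([x, x+1] : Word).destutter (· ≠ ·) = [x, x+1] := by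
        rw [List.destutter_pair, if_pos hxy]
      rw [this]; simp) _ h'
  unfold sameType at hst
  rw [List.destutter_pair, if_pos hxy] at hst
  exact alt_eq_pair hxy hst.symm

lemma msat_symm {M : Type} [Monoid M] {u v : Word} (h : MSat M u v) : MSat M v u :=
  fun φ => (h φ).symm

lemma length_eq_counts {x y : Var} (hxy : x ≠ y) : ∀ {r : Word},
    (∀ c ∈ r, c = x ∨ c = y) → r.length = r.count x + r.count y := by
  have hyx : y ≠ x := Ne.symm hxy
  intro r
  induction r with
  | nil => simp
  | cons c l ih =>
    intro hall
    have hl := ih fun d hd => hall d (List.mem_cons_of_mem _ hd)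
    rcases hall c (List.mem_cons_self) with rfl | rfl
    · simp [List.count_cons, hl, hxy]; omega
    · simp [List.count_cons, hl, hyx]; omega

lemma pair_cases {x y : Var} (hxy : x ≠ y) {r : Word} (hall : ∀ c ∈ r, c = x ∨ c = y)
    (hx : r.count x = 1) (hy : r.count y = 1) : r = [x, y] ∨ r = [y, x] := by
  have hlen : r.length = 2 := by rw [length_eq_counts hxy hall, hx, hy]
  match r, hlen with
  | [c, d], _ =>
    rcases hall c (by simp) with rfl | rfl
    · rcases hall d (by simp) with rfl | rfl
      · simp [List.count_cons] at hx
      · exact Or.inl rfl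
    · rcases hall d (by simp) with rfl | rfl
      · exact Or.inr rfl
      · simp [List.count_cons] at hy

lemma filt_pair {M : Type} [Monoid M] (hC3 : MPropC M 3) {u v : Word} (h : MSat M u v)
    {x y : Var} (hxy : x ≠ y)
    (hufilt : u.filter (fun c => c = x || c = y) = [x, y])
    (hvx : v.count x = 1) (hvy : v.count y = 1) :
    v.filter (fun c => c = x || c = y) = [x, y] := by
  have h' := h.subst' (fun c => if (c = x || c = y) then [c] else [])
  rw [subst_filter, subst_filter, hufilt] at h'
  have hdxy : ([x, y] : Word).destutter (· ≠ ·) = [x, y] := by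
    rw [List.destutter_pair, if_pos hxy]
  have hst := hC3 x y hxy [x, y] (by simp)
    (by intro c hc; rcases List.mem_cons.1 hc with rfl | hc
        · exact Or.inl rfl
        · simp at hc; exact Or.inr hc)
    (by rw [height, hdxy]; simp) _ h'
  unfold sameType at hst
  rw [hdxy] at hst
  have hall : ∀ c ∈ v.filter (fun c => c = x || c = y), c = x ∨ c = y := by
    intro c hc
    have := (List.mem_filter.1 hc).2
    simpa using this
  have hcx : (v.filter (fun c => c = x || c = y)).count x = 1 := by
    rw [List.count_filter (by simp)]; exact hvx
  have hcy : (v.filter (fun c => c = x || c = y)).count y = 1 := by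
    rw [List.count_filter (by simp)]; exact hvy
  rcases pair_cases hxy hall hcx hcy with he | he
  · exact he
  · rw [he] at hst
    rw [List.destutter_pair, if_pos (Ne.symm hxy)] at hst
    simp at hst
    exact absurd hst.1 hxy

lemma exists_first_split {a : Var} : ∀ {l : Word}, a ∈ l →
    ∃ s t, l = s ++ a :: t ∧ a ∉ s := by
  intro l
  induction l with
  | nil => simp
  | cons c l ih =>
    intro hm
    by_cases hca : c = a
    · subst hca; exact ⟨[], l, rfl, by simp⟩
    · have hal : a ∈ l := by
        rcases List.mem_cons.1 hm with rfl | hm'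
        · exact absurd rfl hca
        · exact hm'
      rcases ih hal with ⟨s, t, rfl, hns⟩
      refine ⟨c :: s, t, rfl, ?_⟩
      simp only [List.mem_cons]
      rintro (rfl | hmem)
      · exact hca rfl
      · exact hns hmem

lemma split_core : ∀ (ts : List Var) (v : Word),
    (∀ t ∈ ts, v.count t = 1) →
    List.Pairwise (fun s r => v.filter (fun c => c = s || c = r) = [s, r]) ts →
    ∃ bs : List Word, bs.length = ts.length + 1 ∧ v = ileave bs ts ∧
      ∀ b ∈ bs, ∀ c ∈ b, c ∉ ts := by
  intro ts
  induction ts with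
  | nil => intro v _ _; exact ⟨[v], rfl, rfl, by simp⟩
  | cons t ts ih =>
    intro v hcount hpair
    have htv : t ∈ v := by
      have := hcount t (by simp)
      exact List.count_pos_iff.1 (by omega)
    obtain ⟨v₁, v₂, rfl, hnt⟩ := exists_first_split htv
    have hct := hcount t (by simp)
    rw [List.count_append, List.count_cons] at hct
    simp only [beq_self_eq_true, if_true] at hct
    have hcv₁t : v₁.count t = 0 := by omega
    have hcv₂t : v₂.count t = 0 := by omega
    have htv₂ : t ∉ v₂ := List.count_eq_zero.1 hcv₂t
    have hpc := List.pairwise_cons.1 hpair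
    have hne : ∀ s ∈ ts, t ≠ s := by
      intro s hs heq
      have hf := hpc.1 s hs
      rw [← heq] at hf
      have h2 : (v₁ ++ t :: v₂).count t
          = ((v₁ ++ t :: v₂).filter (fun c => c = t || c = t)).count t :=
        (List.count_filter (by simp)).symm
      rw [hf] at h2
      rw [List.count_append, List.count_cons] at h2
      simp [List.count_cons] at h2
      omega
    have hsv₁ : ∀ s ∈ ts, s ∉ v₁ := by
      intro s hs hmem
      have hf := hpc.1 s hs
      rw [List.filter_append] at hf
      simp only [List.filter_cons] at hf
      rw [if_pos (by simp)] at hf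
      cases hfv : v₁.filter (fun c => c = t || c = s) with
      | nil =>
        have hsm : s ∈ v₁.filter (fun c => c = t || c = s) :=
          List.mem_filter.2 ⟨hmem, by simp⟩
        rw [hfv] at hsm; simp at hsm
      | cons w rest =>
        rw [hfv, List.cons_append] at hf
        injection hf with h1 h2
        have hwmem : w ∈ v₁.filter (fun c => c = t || c = s) := by
          rw [hfv]; exact List.mem_cons_self
        exact hnt (h1 ▸ (List.mem_filter.1 hwmem).1)
    have hpair₂ : List.Pairwise (fun s r => v₂.filter (fun c => c = s || c = r) = [s, r]) ts := by
      refine hpc.2.imp_of_mem ?_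
      intro s r hs hr hf
      have hv₁f : v₁.filter (fun c => c = s || c = r) = [] := by
        rw [List.filter_eq_nil_iff]
        intro c hc
        simp only [Bool.or_eq_true, decide_eq_true_eq]
        rintro (h1 | h1)
        · exact hsv₁ s hs (h1 ▸ hc)
        · exact hsv₁ r hr (h1 ▸ hc)
      rw [List.filter_append, hv₁f] at hf
      simpa [hne s hs, hne r hr] using hf
    have hcount₂ : ∀ s ∈ ts, v₂.count s = 1 := by
      intro s hs
      have h1 := hcount s (by simp [hs])
      rw [List.count_append, List.count_cons] at h1
      have hz : v₁.count s = 0 := List.count_eq_zero.2 (hsv₁ s hs)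
      have hts : (t == s) = false := by simp [hne s hs]
      rw [hz, hts] at h1
      simpa using h1
    obtain ⟨bs, hlen, hveq, hblocks⟩ := ih v₂ hcount₂ hpair₂
    refine ⟨v₁ :: bs, by simp [hlen], by rw [ileave_cons, ← hveq], ?_⟩
    intro b hb c hc
    rcases List.mem_cons.1 hb with rfl | hb
    · intro hcts
      rcases List.mem_cons.1 hcts with rfl | hcts
      · exact hnt hc
      · exact hsv₁ c hcts hc
    · intro hcts
      rcases List.mem_cons.1 hcts with rfl | hcts
      · exact htv₂ (by rw [hveq]; exact mem_ileave_of_block hlen b hb hc)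
      · exact hblocks b hb c hc hcts

lemma shape3 (x y : Var) (a p s : ℕ) :
    List.replicate a x ++ ([x, y] ++ (List.replicate p x ++ ([y, x] ++ List.replicate s x)))
      = List.replicate (a+1) x ++ y :: (List.replicate p x ++ y :: List.replicate (s+1) x) := by
  rw [List.replicate_succ' (n := a), List.replicate_succ (n := s)]
  simp

lemma shapeL (x y : Var) (p s : ℕ) :
    List.replicate p x ++ ([y, x] ++ List.replicate s x)
      = List.replicate p x ++ y :: List.replicate (s+1) x := by
  rw [List.replicate_succ (n := s)]
  simp

lemma shapeR (x y : Var) (a p : ℕ) :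
    List.replicate a x ++ ([x, y] ++ List.replicate p x)
      = List.replicate (a+1) x ++ y :: List.replicate p x := by
  rw [List.replicate_succ' (n := a)]
  simp

lemma mem_shape {x y c : Var} {w : Word}
    (hw : ∃ a b p, w = List.replicate a x ++ y :: (List.replicate p x ++ y :: List.replicate b x)
        ∨ w = List.replicate a x ++ y :: List.replicate b x)
    (hc : c ∈ w) : c = x ∨ c = y := by
  obtain ⟨a, b, p, hw | hw⟩ := hw <;> subst hw <;>
    (simp only [List.mem_append, List.mem_cons, List.mem_replicate] at hc; tauto)

lemma mid_helper {M : Type} [Monoid M] (hC3 : MPropC M 3) {u v : Word} (h : MSat M u v)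
    {x tL tR : Var} {P mid S P' mid' S' : Word}
    (hu : u = P ++ tL :: (mid ++ tR :: S)) (hv : v = P' ++ tL :: (mid' ++ tR :: S'))
    (hLR : tL ≠ tR) (hxL : x ≠ tL) (hxR : x ≠ tR)
    (hP : ∀ c ∈ P, c ≠ tL ∧ c ≠ tR) (hm : ∀ c ∈ mid, c ≠ tL ∧ c ≠ tR)
    (hS : ∀ c ∈ S, c ≠ tL ∧ c ≠ tR)
    (hP' : ∀ c ∈ P', c ≠ tL ∧ c ≠ tR) (hm' : ∀ c ∈ mid', c ≠ tL ∧ c ≠ tR)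
    (hS' : ∀ c ∈ S', c ≠ tL ∧ c ≠ tR)
    (hxmid : x ∉ mid) : x ∉ mid' := by
  set y := x + 1 with hy
  have hxy : x ≠ y := by simp [hy]
  set Θ : Var → Word := fun c =>
    if c = x then [x] else if c = tL then [x, y] else if c = tR then [y, x] else [] with hΘ
  have hsub : ∀ {w : Word}, (∀ c ∈ w, c ≠ tL ∧ c ≠ tR) →
      subst Θ w = List.replicate (w.count x) x := by
    intro w hw
    refine subst_single fun c hc => ?_
    by_cases hcx : c = x <;> simp [hΘ, hcx, (hw c hc).1, (hw c hc).2]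
  have hΘL : Θ tL = [x, y] := by simp [hΘ, Ne.symm hxL]
  have hΘR : Θ tR = [y, x] := by simp [hΘ, Ne.symm hxR, Ne.symm hLR]
  have hcompu : subst Θ u = List.replicate (P.count x + 1) x
      ++ y :: (List.replicate (mid.count x) x ++ y :: List.replicate (S.count x + 1) x) := by
    rw [hu, subst_append, subst_cons, subst_append, subst_cons, hsub hP, hsub hm, hsub hS,
      hΘL, hΘR, shape3]
  have hcompv : subst Θ v = List.replicate (P'.count x + 1) x
      ++ y :: (List.replicate (mid'.count x) x ++ y :: List.replicate (S'.count x + 1) x) := by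
    rw [hv, subst_append, subst_cons, subst_append, subst_cons, hsub hP', hsub hm', hsub hS',
      hΘL, hΘR, shape3]
  have h' := h.subst' Θ
  rw [hcompu, hcompv] at h'
  have hc0 : mid.count x = 0 := List.count_eq_zero.2 hxmid
  have hst := hC3 x y hxy _ (by simp)
    (fun c hc => mem_shape ⟨_, _, _, Or.inl rfl⟩ hc)
    (by rw [height, pat_mid hxy, if_pos hc0]; simp) _ h'
  unfold sameType at hst
  rw [pat_mid hxy, if_pos hc0, pat_mid hxy] at hst
  by_cases hc0' : mid'.count x = 0
  · exact List.count_eq_zero.1 hc0'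
  · rw [if_neg hc0'] at hst
    simp at hst
  
lemma edgeL_helper {M : Type} [Monoid M] (hC3 : MPropC M 3) {u v : Word} (h : MSat M u v)
    {x tR : Var} {mid S mid' S' : Word}
    (hu : u = mid ++ tR :: S) (hv : v = mid' ++ tR :: S')
    (hxR : x ≠ tR)
    (hm : ∀ c ∈ mid, c ≠ tR) (hS : ∀ c ∈ S, c ≠ tR)
    (hm' : ∀ c ∈ mid', c ≠ tR) (hS' : ∀ c ∈ S', c ≠ tR)
    (hxmid : x ∉ mid) : x ∉ mid' := by
  set y := x + 1 with hy
  have hxy : x ≠ y := by simp [hy]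
  set Θ : Var → Word := fun c =>
    if c = x then [x] else if c = tR then [y, x] else [] with hΘ
  have hsub : ∀ {w : Word}, (∀ c ∈ w, c ≠ tR) →
      subst Θ w = List.replicate (w.count x) x := by
    intro w hw
    refine subst_single fun c hc => ?_
    by_cases hcx : c = x <;> simp [hΘ, hcx, hw c hc]
  have hΘR : Θ tR = [y, x] := by simp [hΘ, Ne.symm hxR]
  have hcompu : subst Θ u = List.replicate (mid.count x) x
      ++ y :: List.replicate (S.count x + 1) x := by
    rw [hu, subst_append, subst_cons, hsub hm, hsub hS, hΘR, shapeL]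
  have hcompv : subst Θ v = List.replicate (mid'.count x) x
      ++ y :: List.replicate (S'.count x + 1) x := by
    rw [hv, subst_append, subst_cons, hsub hm', hsub hS', hΘR, shapeL]
  have h' := h.subst' Θ
  rw [hcompu, hcompv] at h'
  have hc0 : mid.count x = 0 := List.count_eq_zero.2 hxmid
  have hst := hC3 x y hxy _ (by simp)
    (fun c hc => mem_shape ⟨_, _, 0, Or.inr rfl⟩ hc)
    (by rw [height, pat_edgeL hxy, if_pos hc0]; simp) _ h'
  unfold sameType at hst
  rw [pat_edgeL hxy, if_pos hc0, pat_edgeL hxy] at hst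
  by_cases hc0' : mid'.count x = 0
  · exact List.count_eq_zero.1 hc0'
  · rw [if_neg hc0'] at hst
    simp at hst

lemma edgeR_helper {M : Type} [Monoid M] (hC3 : MPropC M 3) {u v : Word} (h : MSat M u v)
    {x tL : Var} {P mid P' mid' : Word}
    (hu : u = P ++ tL :: mid) (hv : v = P' ++ tL :: mid')
    (hxL : x ≠ tL)
    (hP : ∀ c ∈ P, c ≠ tL) (hm : ∀ c ∈ mid, c ≠ tL)
    (hP' : ∀ c ∈ P', c ≠ tL) (hm' : ∀ c ∈ mid', c ≠ tL)
    (hxmid : x ∉ mid) : x ∉ mid' := by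
  set y := x + 1 with hy
  have hxy : x ≠ y := by simp [hy]
  set Θ : Var → Word := fun c =>
    if c = x then [x] else if c = tL then [x, y] else [] with hΘ
  have hsub : ∀ {w : Word}, (∀ c ∈ w, c ≠ tL) →
      subst Θ w = List.replicate (w.count x) x := by
    intro w hw
    refine subst_single fun c hc => ?_
    by_cases hcx : c = x <;> simp [hΘ, hcx, hw c hc]
  have hΘL : Θ tL = [x, y] := by simp [hΘ, Ne.symm hxL]
  have hcompu : subst Θ u = List.replicate (P.count x + 1) x
      ++ y :: List.replicate (mid.count x) x := by
    rw [hu, subst_append, subst_cons, hsub hP, hsub hm, hΘL, shapeR]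
  have hcompv : subst Θ v = List.replicate (P'.count x + 1) x
      ++ y :: List.replicate (mid'.count x) x := by
    rw [hv, subst_append, subst_cons, hsub hP', hsub hm', hΘL, shapeR]
  have h' := h.subst' Θ
  rw [hcompu, hcompv] at h'
  have hc0 : mid.count x = 0 := List.count_eq_zero.2 hxmid
  have hst := hC3 x y hxy _ (by simp)
    (fun c hc => mem_shape ⟨_, _, 0, Or.inr rfl⟩ hc)
    (by rw [height, pat_edgeR hxy, if_pos hc0]; simp) _ h'
  unfold sameType at hst
  rw [pat_edgeR hxy, if_pos hc0, pat_edgeR hxy] at hst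
  by_cases hc0' : mid'.count x = 0
  · exact List.count_eq_zero.1 hc0'
  · rw [if_neg hc0'] at hst
    simp at hst

lemma fin_decomp : ∀ (m : ℕ) (t : Fin m → Var) (b : Fin (m+1) → Word),
    (List.ofFn fun i : Fin m => b i.castSucc ++ [t i]).flatten ++ b (Fin.last m)
      = ileave (List.ofFn b) (List.ofFn t) := by
  intro m
  induction m with
  | zero =>
    intro t b
    simp [ileave]
  | succ m ih =>
    intro t b
    have key := ih (fun i => t i.succ) (fun q => b q.succ)
    rw [List.ofFn_succ (f := fun i : Fin (m+1) => b i.castSucc ++ [t i]),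
      List.ofFn_succ (f := b), List.ofFn_succ (f := t), ileave_cons, List.flatten_cons]
    simp only [← Fin.succ_castSucc]
    rw [← Fin.succ_last]
    rw [List.append_assoc, key]
    simp

lemma ileave_split_at {as : List Word} {ts : List Var} (hlen : as.length = ts.length + 1)
    {q : ℕ} (hq : q < ts.length) :
    ileave as ts = ileave (as.take (q+1)) (ts.take q)
      ++ ts[q] :: ileave (as.drop (q+1)) (ts.drop (q+1)) := by
  have h1 : as = as.take (q+1) ++ as.drop (q+1) := (List.take_append_drop _ _).symm
  have h2 : ts = ts.take q ++ ts[q] :: ts.drop (q+1) := by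
    conv_lhs => rw [← List.take_append_drop q ts]
    rw [List.drop_eq_getElem_cons hq]
  conv_lhs => rw [h1, h2]
  exact ileave_split₂ (by
    rw [List.length_take, List.length_take]
    omega) _ _

lemma nodup_sep {l : List Var} (hnd : l.Nodup) {i : ℕ} (hi : i < l.length) :
    l[i] ∉ l.take i ∧ l[i] ∉ l.drop (i+1) := by
  have hdec : l = l.take i ++ l[i] :: l.drop (i+1) := by
    conv_lhs => rw [← List.take_append_drop i l]
    rw [List.drop_eq_getElem_cons hi]
  have hcnt : (l.take i ++ l[i] :: l.drop (i+1)).count l[i] ≤ 1 := by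
    conv_lhs => rw [← hdec]
    exact List.nodup_iff_count_le_one.1 hnd _
  rw [List.count_append, List.count_cons] at hcnt
  simp only [beq_self_eq_true, if_true] at hcnt
  constructor
  · intro hmem
    have := List.count_pos_iff.2 hmem
    omega
  · intro hmem
    have := List.count_pos_iff.2 hmem
    omega

lemma block_con {M : Type} [Monoid M] (hC3 : MPropC M 3) {u v : Word} (h : MSat M u v)
    {as bs : List Word} {ts : List Var}
    (hu : u = ileave as ts) (hv : v = ileave bs ts)
    (hlen : as.length = ts.length + 1) (hlen' : bs.length = ts.length + 1)
    (hnd : ts.Nodup)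
    (hba : ∀ w ∈ as, ∀ c ∈ w, c ∉ ts) (hbb : ∀ w ∈ bs, ∀ c ∈ w, c ∉ ts)
    {x : Var} (hxts : x ∉ ts) {q : ℕ} (hq : q < as.length) (hq' : q < bs.length)
    (hxa : x ∉ as[q]) : x ∉ bs[q] := by
  rcases Nat.eq_zero_or_pos ts.length with hts0 | hts0
  · -- m = 0 : u = as[0], v = bs[0]
    have hts : ts = [] := List.length_eq_zero_iff.1 hts0
    subst hts
    have has : as = [as[0]] := by
      have : as.length = 1 := by simpa using hlen
      match as, this with
      | [w], _ => rfl
    have hbs : bs = [bs[0]] := by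
      have : bs.length = 1 := by simpa using hlen'
      obtain ⟨w, hw⟩ := List.length_eq_one_iff.1 this
      subst hw
      rfl
    have hq0 : q = 0 := by simp at hlen; omega
    subst hq0
    have hu' : u = as[0] := by
      rw [hu]
      conv_lhs => rw [has]
      rfl
    have hv' : v = bs[0] := by
      rw [hv]
      conv_lhs => rw [hbs]
      rfl
    intro hxb
    have : 0 < v.count x := List.count_pos_iff.2 (by rw [hv']; exact hxb)
    have := con_count hC3 (msat_symm h) this
    exact hxa (by rw [← hu']; exact List.count_pos_iff.1 this)
  · rcases Nat.eq_zero_or_pos q with rfl | hq0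
    · -- q = 0, ts nonempty : edgeL
      obtain ⟨t0, ts', rfl⟩ := List.exists_cons_of_ne_nil (List.ne_nil_of_length_pos hts0)
      obtain ⟨a0, as', rfl⟩ := List.exists_cons_of_ne_nil (List.ne_nil_of_length_pos hq)
      obtain ⟨b0, bs', rfl⟩ := List.exists_cons_of_ne_nil (List.ne_nil_of_length_pos hq')
      have hndc := List.nodup_cons.1 hnd
      have hside : ∀ (c0 : Word) (cs : List Word), (∀ w ∈ c0 :: cs, ∀ c ∈ w, c ∉ t0 :: ts') →
          ∀ c ∈ ileave cs ts', c ≠ t0 := by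
        intro c0 cs hcs c hc he
        rcases mem_ileave hc with ⟨w, hw, hcw⟩ | hcts
        · exact hcs w (List.mem_cons_of_mem _ hw) c hcw (he ▸ List.mem_cons_self)
        · exact hndc.1 (he ▸ hcts)
      have hxa0 : x ∉ a0 := by simpa using hxa
      have hres : x ∉ b0 :=
        edgeL_helper hC3 h (by rw [hu]; rfl) (by rw [hv]; rfl)
          (fun he => hxts (he ▸ List.mem_cons_self))
          (fun c hc he => hba a0 (List.mem_cons_self) c hc (he ▸ List.mem_cons_self))
          (hside a0 as' hba)
          (fun c hc he => hbb b0 (List.mem_cons_self) c hc (he ▸ List.mem_cons_self))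
          (hside b0 bs' hbb) hxa0
      simpa using hres
    · -- q > 0
      obtain ⟨k, rfl⟩ : ∃ k, q = k + 1 := ⟨q - 1, by omega⟩
      have hk : k < ts.length := by omega
      have hsepk := nodup_sep hnd hk
      have hmemtsk : ts[k] ∈ ts := List.getElem_mem _
      rcases Nat.lt_or_ge (k+1) ts.length with hk1 | hk1
      · -- interior case
        have hsepk1 := nodup_sep hnd hk1
        have hmemtsk1 : ts[k+1] ∈ ts := List.getElem_mem _
        have hLR : ts[k] ≠ ts[k+1] := by
          intro he
          apply hsepk.2
          rw [List.drop_eq_getElem_cons hk1, he]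
          exact List.mem_cons_self
        have hdec : ∀ (cs : List Word), ∀ _hcl : cs.length = ts.length + 1,
            ileave cs ts = ileave (cs.take (k+1)) (ts.take k)
              ++ ts[k] :: (cs[k+1]'(by omega) ++ ts[k+1] :: ileave (cs.drop (k+2)) (ts.drop (k+2))) := by
          intro cs hcslen
          rw [ileave_split_at hcslen hk]
          congr 1
          rw [List.drop_eq_getElem_cons (l := cs) (by omega),
            List.drop_eq_getElem_cons (l := ts) hk1, ileave_cons]
        -- side conditions
        have hcond : ∀ (cs : List Word), ∀ _hcl : cs.length = ts.length + 1,
            (∀ w ∈ cs, ∀ c ∈ w, c ∉ ts) →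
            (∀ c ∈ ileave (cs.take (k+1)) (ts.take k), c ≠ ts[k] ∧ c ≠ ts[k+1]) ∧
            (∀ c ∈ cs[k+1]'(by omega), c ≠ ts[k] ∧ c ≠ ts[k+1]) ∧
            (∀ c ∈ ileave (cs.drop (k+2)) (ts.drop (k+2)), c ≠ ts[k] ∧ c ≠ ts[k+1]) := by
          intro cs hcslen hcs
          have hblk : ∀ w ∈ cs, ∀ c ∈ w, c ≠ ts[k] ∧ c ≠ ts[k+1] := by
            intro w hw c hc
            exact ⟨fun he => hcs w hw c hc (he ▸ hmemtsk),
                   fun he => hcs w hw c hc (he ▸ hmemtsk1)⟩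
          refine ⟨?_, hblk _ (List.getElem_mem _), ?_⟩
          · intro c hc
            rcases mem_ileave hc with ⟨w, hw, hcw⟩ | hcts
            · exact hblk w (List.mem_of_mem_take hw) c hcw
            · constructor
              · exact fun he => hsepk.1 (he ▸ hcts)
              · intro he
                apply hsepk1.1
                rw [← he]
                have : ts.take k <+ ts.take (k+1) := by
                  have h1 := List.take_sublist k (ts.take (k+1))
                  rwa [List.take_take, min_eq_left (by omega)] at h1
                exact this.mem hcts
          · intro c hc
            rcases mem_ileave hc with ⟨w, hw, hcw⟩ | hcts
            · exact hblk w (List.mem_of_mem_drop hw) c hcw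
            · constructor
              · intro he
                apply hsepk.2
                rw [List.drop_eq_getElem_cons hk1, ← he]
                exact List.mem_cons_of_mem _ hcts
              · exact fun he => hsepk1.2 (he ▸ hcts)
        obtain ⟨hP, hmid, hS⟩ := hcond as hlen hba
        obtain ⟨hP', hmid', hS'⟩ := hcond bs hlen' hbb
        exact mid_helper hC3 h (hu.trans (hdec as hlen)) (hv.trans (hdec bs hlen'))
          hLR (fun he => hxts (he ▸ hmemtsk)) (fun he => hxts (he ▸ hmemtsk1))
          (fun c hc => hP c hc) (fun c hc => hmid c hc) (fun c hc => hS c hc)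
          (fun c hc => hP' c hc) (fun c hc => hmid' c hc) (fun c hc => hS' c hc) hxa
      · -- q = ts.length : edgeR case
        have hkeq : k + 1 = ts.length := by omega
        have hdec : ∀ (cs : List Word), ∀ _hcl : cs.length = ts.length + 1,
            ileave cs ts = ileave (cs.take (k+1)) (ts.take k)
              ++ ts[k] :: (cs[k+1]'(by omega)) := by
          intro cs hcslen
          rw [ileave_split_at hcslen hk]
          congr 1
          rw [List.drop_eq_getElem_cons (l := cs) (by omega),
            List.drop_eq_nil_of_le (show ts.length ≤ k + 1 by omega),
            List.drop_eq_nil_of_le (show cs.length ≤ k + 2 by omega)]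
          rfl
        have hcond : ∀ (cs : List Word), ∀ _hcl : cs.length = ts.length + 1,
            (∀ w ∈ cs, ∀ c ∈ w, c ∉ ts) →
            (∀ c ∈ ileave (cs.take (k+1)) (ts.take k), c ≠ ts[k]) ∧
            (∀ c ∈ cs[k+1]'(by omega), c ≠ ts[k]) := by
          intro cs hcslen hcs
          have hblk : ∀ w ∈ cs, ∀ c ∈ w, c ≠ ts[k] :=
            fun w hw c hc he => hcs w hw c hc (he ▸ hmemtsk)
          refine ⟨?_, hblk _ (List.getElem_mem _)⟩
          intro c hc
          rcases mem_ileave hc with ⟨w, hw, hcw⟩ | hcts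
          · exact hblk w (List.mem_of_mem_take hw) c hcw
          · exact fun he => hsepk.1 (he ▸ hcts)
        obtain ⟨hP, hmid⟩ := hcond as hlen hba
        obtain ⟨hP', hmid'⟩ := hcond bs hlen' hbb
        exact edgeR_helper hC3 h (hu.trans (hdec as hlen)) (hv.trans (hdec bs hlen'))
          (fun he => hxts (he ▸ hmemtsk)) hP hmid hP' hmid' hxa

lemma pair_sublist {m : ℕ} (t : Fin m → Var) {i j : Fin m} (hij : i < j) :
    [t i, t j] <+ List.ofFn t := by
  have hi : (i : ℕ) < (List.ofFn t).length := by simp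
  have h2 : t j ∈ (List.ofFn t).drop ((i : ℕ) + 1) := by
    rw [List.mem_iff_getElem]
    refine ⟨(j : ℕ) - ((i : ℕ) + 1), by simp; omega, ?_⟩
    rw [List.getElem_drop, List.getElem_ofFn]
    congr 1
    apply Fin.ext
    simp
    omega
  have h3 : [t i, t j] <+ (List.ofFn t).drop (i : ℕ) := by
    rw [List.drop_eq_getElem_cons hi, List.getElem_ofFn]
    have : (⟨(i : ℕ), by simpa using hi⟩ : Fin m) = i := by apply Fin.ext; rfl
    rw [this]
    exact (List.singleton_sublist.2 h2).cons₂ (t i)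
  exact h3.trans (List.drop_sublist _ _)

end Helpers

/-- Fact 3.1 ("basic"): for a monoid with Property (C₃), any
identity `u ≈ v` preserves the linear and non-linear variables, the order of
the linear variables, and the contents of the corresponding blocks. -/
theorem stmt14 (M : Type) [Monoid M] (hC3 : MPropC M 3)
    (u v : Word) (hu : u ≠ []) (hv : v ≠ []) (h : MSat M u v)
    (m : ℕ) (t : Fin m → Var) (a : Fin (m + 1) → Word)
    (hdecomp : u = (List.ofFn fun i : Fin m => a i.castSucc ++ [t i]).flatten
      ++ a (Fin.last m))
    (htlin : lin u = Set.range t)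
    (ha : ∀ q, ∀ c ∈ a q, c ∈ nonlin u) :
    lin u = lin v ∧ nonlin u = nonlin v ∧
      ∃ b : Fin (m + 1) → Word,
        v = (List.ofFn fun i : Fin m => b i.castSucc ++ [t i]).flatten
          ++ b (Fin.last m) ∧
        (∀ q, ∀ c ∈ b q, c ∈ nonlin v) ∧
        (∀ q, con (a q) = con (b q)) := by
  have hcount_t : ∀ i, u.count (t i) = 1 := by
    intro i
    have hm : t i ∈ lin u := by rw [htlin]; exact Set.mem_range_self i
    exact hm
  have hlin : lin u = lin v := by
    ext x
    exact ⟨fun hx => lin_count hC3 h hx, fun hx => lin_count hC3 (msat_symm h) hx⟩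
  have hnon : nonlin u = nonlin v := by
    ext x
    simp only [nonlin, Set.mem_setOf_eq]
    constructor
    · intro hx
      have h1 : 0 < v.count x := con_count hC3 h (by omega)
      rcases eq_or_ne (v.count x) 1 with h2 | h2
      · have := lin_count hC3 (msat_symm h) h2
        omega
      · omega
    · intro hx
      have h1 : 0 < u.count x := con_count hC3 (msat_symm h) (by omega)
      rcases eq_or_ne (u.count x) 1 with h2 | h2
      · have := lin_count hC3 h h2
        omega
      · omega
  have huil : u = ileave (List.ofFn a) (List.ofFn t) := by
    rw [hdecomp, fin_decomp]
  have htsl : (List.ofFn t).Sublist u := by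
    rw [huil]; exact sublist_ileave (by simp)
  have hinj : Function.Injective t := by
    have key : ∀ i j : Fin m, i < j → t i = t j → False := by
      intro i j hlt he
      have hcnt := (pair_sublist t hlt).count_le (t i)
      have h2 := htsl.count_le (t i)
      have h3 : List.count (t i) [t i, t j] = 2 := by
        simp [List.count_cons, he]
      have h4 := hcount_t i
      omega
    intro i j hij
    by_contra hne
    rcases Ne.lt_or_gt hne with hlt | hlt
    · exact key i j hlt hij
    · exact key j i hlt hij.symm
  have hnd : (List.ofFn t).Nodup := List.nodup_ofFn.2 hinj
  have hblocksa : ∀ w ∈ List.ofFn a, ∀ c ∈ w, c ∉ List.ofFn t := by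
    intro w hw c hc hcts
    obtain ⟨q, hq⟩ := Set.mem_range.1 ((List.mem_ofFn' a w).1 hw)
    obtain ⟨i, hi⟩ := Set.mem_range.1 ((List.mem_ofFn' t c).1 hcts)
    have h1 : 2 ≤ u.count c := ha q c (by rw [hq]; exact hc)
    have h2 := hcount_t i
    rw [hi] at h2
    omega
  have hufilt : ∀ i j : Fin m, i < j → u.filter (fun c => c = t i || c = t j) = [t i, t j] := by
    intro i j hij
    have hne : t i ≠ t j := fun he => absurd (hinj he) hij.ne
    have hblock : ∀ w ∈ List.ofFn a, w.filter (fun c => c = t i || c = t j) = [] := by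
      intro w hw
      rw [List.filter_eq_nil_iff]
      intro c hc
      simp only [Bool.or_eq_true, decide_eq_true_eq]
      rintro (h1 | h1)
      · exact hblocksa w hw c hc (h1 ▸ (List.mem_ofFn' t (t i)).2 (Set.mem_range_self i))
      · exact hblocksa w hw c hc (h1 ▸ (List.mem_ofFn' t (t j)).2 (Set.mem_range_self j))
    rw [huil, filter_ileave (by simp) hblock]
    have hsub2 : ([t i, t j] : Word).Sublist ((List.ofFn t).filter (fun c => c = t i || c = t j)) := by
      have h1 := (pair_sublist t hij).filter (fun c => c = t i || c = t j)
      simpa using h1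
    have hallf : ∀ c ∈ (List.ofFn t).filter (fun c => c = t i || c = t j),
        c = t i ∨ c = t j := by
      intro c hc
      have := (List.mem_filter.1 hc).2
      simpa using this
    have hci : ((List.ofFn t).filter (fun c => c = t i || c = t j)).count (t i) = 1 := by
      rw [List.count_filter (by simp)]
      exact List.count_eq_one_of_mem hnd ((List.mem_ofFn' t (t i)).2 (Set.mem_range_self i))
    have hcj : ((List.ofFn t).filter (fun c => c = t i || c = t j)).count (t j) = 1 := by
      rw [List.count_filter (by simp)]
      exact List.count_eq_one_of_mem hnd ((List.mem_ofFn' t (t j)).2 (Set.mem_range_self j))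
    have hlenf := length_eq_counts hne hallf
    exact (hsub2.eq_of_length (by rw [hlenf, hci, hcj]; rfl)).symm
  have hvcnt : ∀ i, v.count (t i) = 1 := fun i => lin_count hC3 h (hcount_t i)
  have hvpw : List.Pairwise (fun s r => v.filter (fun c => c = s || c = r) = [s, r])
      (List.ofFn t) := by
    rw [List.pairwise_ofFn]
    intro i j hij
    exact filt_pair hC3 h (fun he => absurd (hinj he) hij.ne) (hufilt i j hij)
      (hvcnt i) (hvcnt j)
  obtain ⟨bs, hbslen, hvile, hbblocks⟩ := split_core (List.ofFn t) v
    (by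
      intro s hs
      obtain ⟨i, hi⟩ := Set.mem_range.1 ((List.mem_ofFn' t s).1 hs)
      rw [← hi]; exact hvcnt i) hvpw
  have hbslen' : bs.length = m + 1 := by simpa using hbslen
  refine ⟨hlin, hnon, fun q => bs[q.val]'(by rw [hbslen']; exact q.isLt), ?_, ?_, ?_⟩
  · have hofb : List.ofFn (fun q : Fin (m+1) => bs[q.val]'(by rw [hbslen']; exact q.isLt)) = bs := by
      apply List.ext_getElem (by simp [hbslen'])
      intro i h1 h2
      rw [List.getElem_ofFn]
    rw [fin_decomp m t (fun q : Fin (m+1) => bs[q.val]'(by rw [hbslen']; exact q.isLt)), hofb]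
    exact hvile
  · intro q c hc
    have hbq : bs[q.val]'(by rw [hbslen']; exact q.isLt) ∈ bs := List.getElem_mem _
    have hcv : c ∈ v := by
      rw [hvile]
      exact mem_ileave_of_block (by simp [hbslen']) _ hbq hc
    have hcnots : c ∉ List.ofFn t := hbblocks _ hbq c hc
    have h1 : 0 < v.count c := List.count_pos_iff.2 hcv
    rcases eq_or_ne (v.count c) 1 with h2 | h2
    · exfalso
      have hcl : c ∈ lin v := h2
      rw [← hlin, htlin] at hcl
      obtain ⟨i, hi⟩ := hcl
      exact hcnots ((List.mem_ofFn' t c).2 ⟨i, hi⟩)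
    · show 2 ≤ v.count c
      omega
  · intro q
    ext x
    simp only [con, Set.mem_setOf_eq]
    have haq : (List.ofFn a)[q.val]'(by simp [Nat.lt_succ_iff.mp q.isLt]) = a q := by
      rw [List.getElem_ofFn]
    have hqa : q.val < (List.ofFn a).length := by simp [Nat.lt_succ_iff.mp q.isLt]
    have hqb : q.val < bs.length := by rw [hbslen']; exact q.isLt
    by_cases hxts : x ∈ List.ofFn t
    · constructor
      · intro hx
        exfalso
        obtain ⟨i, hi⟩ := Set.mem_range.1 ((List.mem_ofFn' t x).1 hxts)
        have h1 : 2 ≤ u.count x := ha q x hx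
        have h2 := hcount_t i
        rw [hi] at h2
        omega
      · intro hx
        exact (hbblocks _ (List.getElem_mem _) x hx hxts).elim
    · constructor
      · intro hx
        by_contra hxb
        have := block_con hC3 (msat_symm h) hvile huil
          (by simpa using hbslen) (by simp) hnd hbblocks hblocksa hxts
          (q := q.val) hqb hqa hxb
        rw [haq] at this
        exact this hx
      · intro hx
        by_contra hxa
        have := block_con hC3 h huil hvile
          (by simp) (by simpa using hbslen) hnd hblocksa hbblocks hxts
          (q := q.val) hqa hqb (by rw [haq]; exact hxa)
        exact this hx
end

section
/- For every word u and every substitution Θ: 𝔄 → 𝔄⁺ there exists a map ρ: 𝔄 → 𝔄 (a renaming of variables, applied letterwise to words) such that, setting E(u) := ρ(u): (i) con(E(u)) ⊆ con(u); (ii) Θ(E(u)) is of the same type as Θ(u); and (iii) for all x, y ∈ con(E(u)), if Θ(x) and Θ(y) are powers of the same variable then x = y. -/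
/-!
Map every variable `x` of `u` to a fixed representative, among the variables of `u`, of the
variables `y` for which `Θ y` has the same type as `Θ x`. The type of a product depends only on
the types of its factors, so `Θ (E u)` has the type of `Θ u`. The type of a power of `c` is `[c]`,
so variables of `u` sent to powers of the same `c` all get the same representative.
-/

namespace List

variable {α : Type*}

theorem head?_destutter' (R : α → α → Prop) [DecidableRel R] (a : α) (l : List α) :
    (l.destutter' R a).head? = some a := by
  induction l generalizing a with
  | nil => rfl
  | cons b t ih =>
    rw [destutter'_cons]
    split_ifs
    · rfl
    · exact ih a

variable [DecidableEq α]

def stutterCons (a : α) (d : List α) : List α := if d.head? = some a then d else a :: d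

theorem stutterCons_cons_self (a : α) (d : List α) : stutterCons a (a :: d) = a :: d :=
  if_pos rfl

theorem stutterCons_of_head?_ne {a : α} {d : List α} (h : d.head? ≠ some a) :
    stutterCons a d = a :: d :=
  if_neg h

theorem stutterCons_stutterCons (a : α) (d : List α) :
    stutterCons a (stutterCons a d) = stutterCons a d := by
  unfold stutterCons
  split_ifs <;> simp_all

theorem destutter_ne_cons (a : α) (l : List α) :
    (a :: l).destutter (· ≠ ·) = stutterCons a (l.destutter (· ≠ ·)) := by
  cases l with
  | nil => simp [stutterCons]
  | cons b t =>
    rw [destutter_cons_cons, destutter_cons', stutterCons, head?_destutter']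
    by_cases hab : a = b
    · subst hab
      simp
    · simp [hab, Ne.symm hab]

theorem destutter_ne_replicate_succ (k : ℕ) (a : α) :
    (replicate (k + 1) a).destutter (· ≠ ·) = [a] := by
  induction k with
  | zero => rfl
  | succ k ih => rw [replicate_succ, destutter_ne_cons, ih, stutterCons_cons_self]

theorem foldr_stutterCons_destutter_ne (l d : List α) :
    (l.destutter (· ≠ ·)).foldr stutterCons d = l.foldr stutterCons d := by
  induction l with
  | nil => rfl
  | cons a l ih =>
    rw [destutter_ne_cons, foldr_cons, ← ih]
    by_cases h : (l.destutter (· ≠ ·)).head? = some a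
    · obtain ⟨D, hD⟩ := head?_eq_some_iff.mp h
      rw [hD, stutterCons_cons_self, foldr_cons, stutterCons_stutterCons]
    · rw [stutterCons_of_head?_ne h, foldr_cons]

theorem destutter_ne_append (l m : List α) :
    (l ++ m).destutter (· ≠ ·) =
      (l.destutter (· ≠ ·)).foldr stutterCons (m.destutter (· ≠ ·)) := by
  rw [foldr_stutterCons_destutter_ne]
  induction l with
  | nil => rfl
  | cons a l ih => rw [cons_append, destutter_ne_cons, ih, foldr_cons]

end List

theorem sameType_append {u u' v v' : Word} (hu : sameType u u') (hv : sameType v v') :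
    sameType (u ++ v) (u' ++ v') := by
  unfold sameType at *
  rw [List.destutter_ne_append, List.destutter_ne_append, hu, hv]

theorem sameType_subst {Θ Θ' : Var → Word} {u : Word} (h : ∀ x ∈ u, sameType (Θ x) (Θ' x)) :
    sameType (subst Θ u) (subst Θ' u) := by
  induction u with
  | nil => rfl
  | cons a u ih =>
    exact sameType_append (h a List.mem_cons_self)
      (ih fun x hx => h x (List.mem_cons_of_mem a hx))

theorem destutter_ne_of_isPowerOf {w : Word} {c : Var} (h : isPowerOf w c) :
    w.destutter (· ≠ ·) = [c] := by
  obtain ⟨k, hk, rfl⟩ := h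
  obtain ⟨k, rfl⟩ := Nat.exists_eq_add_of_lt hk
  exact List.destutter_ne_replicate_succ _ c

theorem stmt16_general (u : Word) (Θ : Var → Word) :
    ∃ ρ : Var → Var,
      con (u.map ρ) ⊆ con u ∧
      sameType (subst Θ (u.map ρ)) (subst Θ u) ∧
      ∀ x y : Var, x ∈ con (u.map ρ) → y ∈ con (u.map ρ) →
        ∀ c : Var, isPowerOf (Θ x) c → isPowerOf (Θ y) c → x = y := by
  let type : Var → Word := fun x => (Θ x).destutter (· ≠ ·)
  let ρ : Var → Var := Function.invFunOn type (con u) ∘ type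
  have hρ_mem (x : Var) (hx : x ∈ u) : ρ x ∈ con u := Function.invFunOn_mem ⟨x, hx, rfl⟩
  have hρ_type (x : Var) (hx : x ∈ u) : type (ρ x) = type x :=
    Function.invFunOn_eq ⟨x, hx, rfl⟩
  refine ⟨ρ, ?_, ?_, ?_⟩
  · intro z hz
    obtain ⟨x, hx, rfl⟩ := List.mem_map.mp hz
    exact hρ_mem x hx
  · rw [subst, List.flatMap_map]
    exact sameType_subst hρ_type
  · intro _ _ hx' hy' c hxc hyc
    obtain ⟨x, hx, rfl⟩ := List.mem_map.mp hx'
    obtain ⟨y, hy, rfl⟩ := List.mem_map.mp hy'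
    have hxy : type x = type y := by
      rw [← hρ_type x hx, ← hρ_type y hy]
      exact (destutter_ne_of_isPowerOf hxc).trans (destutter_ne_of_isPowerOf hyc).symm
    exact congrArg (Function.invFunOn type (con u)) hxy

/-- Fact 4.2: given a word `u` and a substitution `Θ`, one
can rename variables of `u` so that the renamed word `E(u) = ρ∘u` has
content inside `con(u)`, `Θ(E(u))` is of the same type as `Θ(u)`, and
distinct variables of `E(u)` are not sent by `Θ` to powers of the same
variable. -/
theorem stmt16 (u : Word) (Θ : Var → Word) (hΘne : ∀ c : Var, Θ c ≠ []) :
    ∃ ρ : Var → Var,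
      con (u.map ρ) ⊆ con u ∧
      sameType (subst Θ (u.map ρ)) (subst Θ u) ∧
      ∀ x y : Var, x ∈ con (u.map ρ) → y ∈ con (u.map ρ) →
        ∀ c : Var, isPowerOf (Θ x) c → isPowerOf (Θ y) c → x = y :=
  stmt16_general u Θ
end

section
/- Let U be a word such that for every pair of variables x, y ∈ con(U) the word U(x,y) has height at most 4. Let u be a word and Θ: 𝔄 → 𝔄⁺ a substitution such that for all x, y ∈ con(u), if Θ(x) and Θ(y) are powers of the same variable then x = y. If Θ(u) = U, then for every pair of variables x, y ∈ con(u), the word u(x,y) has height at most 4. -/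
/-! Since `Θ(x)` and `Θ(y)` are not powers of a common variable, they contain letters `a ≠ b`.
Replacing `x` by `a` and `y` by `b` turns `u(x, y)` into a word of the same height which is a
subword of `Θ(u)(a, b) = U(a, b)`, and passing to a subword cannot increase the height. -/

lemma height_le_of_sublist {s t : Word} (h : s.Sublist t) : height s ≤ height t :=
  (List.isChain_destutter _ s).length_le_length_destutter_ne
    ((List.destutter_sublist _ s).trans h)

lemma height_map {f : Var → Var} {l : Word} (hf : Set.InjOn f (con l)) :
    height (l.map f) = height l := by
  rw [height, height, ← List.map_destutter fun a ha b hb => (hf.ne_iff ha hb).symm,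
    List.length_map]

lemma map_sublist_subst {Θ : Var → Word} {w : Var → Var} {v u : Word} (hvu : v.Sublist u)
    (hw : ∀ z ∈ v, w z ∈ Θ z) : (v.map w).Sublist (subst Θ u) := by
  induction hvu with
  | slnil => exact List.Sublist.slnil
  | cons z _ ih => exact (ih hw).trans (List.sublist_append_right _ _)
  | cons_cons z _ ih =>
    simp only [List.mem_cons, forall_eq_or_imp] at hw
    exact (List.singleton_sublist.2 hw.1).append (ih hw.2)

lemma isPowerOf_of_forall_eq {w : Word} {c : Var} (hw : w ≠ []) (h : ∀ a ∈ w, a = c) :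
    isPowerOf w c :=
  ⟨w.length, List.length_pos_iff.2 hw, List.eq_replicate_iff.2 ⟨rfl, h⟩⟩

lemma height_del_le_height_del_subst (Θ : Var → Word) (u : Word) {x y a b : Var}
    (hxy : x ≠ y) (hab : a ≠ b) (ha : a ∈ Θ x) (hb : b ∈ Θ y) :
    height (del u [x, y]) ≤ height (del (subst Θ u) [a, b]) := by
  set σ : Var → Var := fun z => if z = x then a else b
  have hcases : ∀ z ∈ del u [x, y], z = x ∨ z = y := fun z hz => by
    simpa using List.of_mem_filter hz
  have hσ : Set.InjOn σ (con (del u [x, y])) := by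
    intro z hz z' hz' h
    rcases hcases z hz with rfl | rfl <;> rcases hcases z' hz' with rfl | rfl <;>
      simp_all [σ, Ne.symm hxy, Ne.symm hab]
  have hsub : ((del u [x, y]).map σ).Sublist (del (subst Θ u) [a, b]) := by
    have hmem : ∀ z ∈ del u [x, y], σ z ∈ Θ z := fun z hz => by
      rcases hcases z hz with rfl | rfl <;> simp [σ, ha, hb, Ne.symm hxy]
    have hab_mem : ∀ z ∈ (del u [x, y]).map σ, decide (z ∈ [a, b]) = true := by
      simp only [List.mem_map]
      rintro _ ⟨z, -, rfl⟩
      by_cases h : z = x <;> simp [σ, h]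
    rw [← List.filter_eq_self.2 hab_mem]
    exact (map_sublist_subst List.filter_sublist hmem).filter _
  calc height (del u [x, y]) = height ((del u [x, y]).map σ) := (height_map hσ).symm
    _ ≤ height (del (subst Θ u) [a, b]) := height_le_of_sublist hsub

/-- Lemma 4.3: if every two-variable deletion of `U` has height
at most 4, `Θ` sends distinct variables of `u` to powers of distinct
variables, and `Θ(u) = U`, then every two-variable deletion of `u` has
height at most 4. -/
theorem stmt17 (U : Word)
    (hU : ∀ x y : Var, x ∈ con U → y ∈ con U → x ≠ y → height (del U [x, y]) ≤ 4)
    (u : Word) (Θ : Var → Word) (hΘne : ∀ c : Var, Θ c ≠ [])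
    (hΘ : ∀ x y : Var, x ∈ con u → y ∈ con u →
      ∀ c : Var, isPowerOf (Θ x) c → isPowerOf (Θ y) c → x = y)
    (h : subst Θ u = U) :
    ∀ x y : Var, x ∈ con u → y ∈ con u → x ≠ y → height (del u [x, y]) ≤ 4 := by
  intro x y hx hy hxy
  obtain ⟨a, ha, b, hb, hab⟩ : ∃ a ∈ Θ x, ∃ b ∈ Θ y, a ≠ b := by
    by_contra! hall
    obtain ⟨c, hc⟩ := List.exists_mem_of_ne_nil _ (hΘne x)
    refine hxy (hΘ x y hx hy c (isPowerOf_of_forall_eq (hΘne x) fun a ha => ?_)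
      (isPowerOf_of_forall_eq (hΘne y) fun b hb => ?_))
    · obtain ⟨d, hd⟩ := List.exists_mem_of_ne_nil _ (hΘne y)
      exact (hall a ha d hd).trans (hall c hc d hd).symm
    · exact (hall c hc b hb).symm
  have haU : a ∈ con U := h ▸ List.mem_flatMap.2 ⟨x, hx, ha⟩
  have hbU : b ∈ con U := h ▸ List.mem_flatMap.2 ⟨y, hy, hb⟩
  subst h
  exact (height_del_le_height_del_subst Θ u hxy hab ha hb).trans (hU a b haU hbU hab)
end

section
/- Let u and v be two words of the same type such that lin(u) = lin(v) and non(u) = non(v). Let Θ: 𝔄 → 𝔄⁺ be a substitution with the property that whenever Θ(x) contains more than one distinct variable, x is linear in u. Then Θ(u) and Θ(v) are of the same type. -/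
namespace List

variable {α β : Type*} [DecidableEq α] [DecidableEq β]

theorem destutter'_ne_cons_cons_self (a b : α) (l : List α) :
    (b :: b :: l).destutter' (· ≠ ·) a = (b :: l).destutter' (· ≠ ·) a := by
  by_cases hab : a = b <;>
    simp only [destutter'_cons, ne_eq, hab, not_true_eq_false, not_false_eq_true, if_true, if_false]

theorem destutter'_ne_destutter' (a b : α) (l : List α) :
    (l.destutter' (· ≠ ·) b).destutter' (· ≠ ·) a = (b :: l).destutter' (· ≠ ·) a := by
  induction l generalizing a b with
  | nil => rfl
  | cons c l ih =>
    by_cases hbc : b = c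
    · subst hbc
      rw [destutter'_cons_neg _ (not_not.mpr rfl), ih, destutter'_ne_cons_cons_self]
    · rw [destutter'_cons_pos _ hbc, destutter'_cons, destutter'_cons, ih, ih]

theorem destutter'_ne_append_destutter (a : α) (X Y : List α) :
    (X ++ Y.destutter (· ≠ ·)).destutter' (· ≠ ·) a = (X ++ Y).destutter' (· ≠ ·) a := by
  induction X generalizing a with
  | nil =>
    cases Y with
    | nil => rfl
    | cons b Y => exact destutter'_ne_destutter' a b Y
  | cons b X ih => simp only [cons_append, destutter'_cons, ih]

theorem destutter_ne_append_destutter (X Y : List α) :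
    (X ++ Y.destutter (· ≠ ·)).destutter (· ≠ ·) = (X ++ Y).destutter (· ≠ ·) := by
  cases X with
  | nil => exact destutter_idem _ _
  | cons a X => exact destutter'_ne_append_destutter a X Y

theorem destutter_ne_replicate_append (c : α) {n : ℕ} (hn : n ≠ 0) (Y : List α) :
    (replicate n c ++ Y).destutter (· ≠ ·) = (c :: Y).destutter (· ≠ ·) := by
  obtain ⟨n, rfl⟩ := Nat.exists_eq_succ_of_ne_zero hn
  induction n with
  | zero => rfl
  | succ n ih =>
    show (c :: (replicate n c ++ Y)).destutter' (· ≠ ·) c = _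
    rw [destutter'_cons_neg _ (not_not.mpr rfl)]
    exact ih n.succ_ne_zero

theorem destutter_ne_append_append_self {l : List α} (hl : l.toFinset.card ≤ 1) (Y : List α) :
    (l ++ (l ++ Y)).destutter (· ≠ ·) = (l ++ Y).destutter (· ≠ ·) := by
  cases l with
  | nil => rfl
  | cons c t =>
    have hrep : c :: t = replicate (t.length + 1) c := eq_replicate_of_mem fun x hx =>
      Finset.card_le_one.mp hl x (mem_toFinset.mpr hx) c (by simp)
    rw [hrep, ← append_assoc, ← replicate_add, destutter_ne_replicate_append c (by omega),
      destutter_ne_replicate_append c (by omega)]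

theorem destutter'_ne_flatMap (f : α → List β) (a : α) (l : List α)
    (hf : ∀ x, 2 ≤ (a :: l).count x → (f x).toFinset.card ≤ 1) :
    ((l.destutter' (· ≠ ·) a).flatMap f).destutter (· ≠ ·)
      = ((a :: l).flatMap f).destutter (· ≠ ·) := by
  induction l generalizing a with
  | nil => rfl
  | cons b l ih =>
    have hf' : ∀ x, 2 ≤ (b :: l).count x → (f x).toFinset.card ≤ 1 := fun x hx =>
      hf x (hx.trans ((sublist_cons_self a _).count_le x))
    by_cases hab : a = b
    · subst hab
      rw [destutter'_cons_neg _ (not_not.mpr rfl), ih a hf', flatMap_cons, flatMap_cons,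
        flatMap_cons, destutter_ne_append_append_self (hf a (by simp))]
    · rw [destutter'_cons_pos _ hab, flatMap_cons, flatMap_cons, ← destutter_ne_append_destutter,
        ih b hf', destutter_ne_append_destutter]

theorem destutter_ne_flatMap_destutter (f : α → List β) (l : List α)
    (hf : ∀ x, 2 ≤ l.count x → (f x).toFinset.card ≤ 1) :
    ((l.destutter (· ≠ ·)).flatMap f).destutter (· ≠ ·) = (l.flatMap f).destutter (· ≠ ·) := by
  cases l with
  | nil => rfl
  | cons a l => exact destutter'_ne_flatMap f a l hf

end List

theorem stmt19_general (u v : Word)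
    (hst : sameType u v)
    (hnon : nonlin u = nonlin v)
    (Θ : Var → Word)
    (hΘ : ∀ x : Var, 2 ≤ (Θ x).toFinset.card → x ∈ lin u) :
    sameType (subst Θ u) (subst Θ v) := by
  have hΘu : ∀ x, 2 ≤ u.count x → (Θ x).toFinset.card ≤ 1 := fun x hx => by
    by_contra h
    have hlin : u.count x = 1 := hΘ x (by omega)
    omega
  have hΘv : ∀ x, 2 ≤ v.count x → (Θ x).toFinset.card ≤ 1 := fun x hx =>
    hΘu x (show x ∈ nonlin u from hnon ▸ hx)
  unfold sameType subst at *
  rw [← List.destutter_ne_flatMap_destutter Θ u hΘu, hst,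
    List.destutter_ne_flatMap_destutter Θ v hΘv]

/-- Lemma 4.1: if `u` and `v` are of the same type with the
same linear and non-linear variables, and `Θ` maps every non-linear variable
of `u` to a power of a single variable, then `Θ(u)` and `Θ(v)` are of the
same type. -/
theorem stmt19 (u v : Word) (hu : u ≠ []) (hv : v ≠ [])
    (hst : sameType u v)
    (hlin : lin u = lin v) (hnon : nonlin u = nonlin v)
    (Θ : Var → Word) (hΘne : ∀ c : Var, Θ c ≠ [])
    (hΘ : ∀ x : Var, 2 ≤ (Θ x).toFinset.card → x ∈ lin u) :
    sameType (subst Θ u) (subst Θ v) :=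
  stmt19_general u v hst hnon Θ hΘ
end
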